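/- arXiv:1607.04246 — 14 statements merged into one kernel-verified Lean document; each statement's English description precedes it below -/
import Mathlib

section
/- Let M = [[1,a,b],[0,1,c],[0,0,1]] be a 3×3 upper unitriangular integer matrix and let s := M⁻¹·Mᵀ, regarded as a 3×3 matrix over ℚ. Then s is unipotent, i.e. (s − 1)³ = 0, if and only if a² + b² + c² − abc = 0. -/
open Matrix

set_option maxHeartbeats 4000000 in
/-- For `M = [[1,a,b],[0,1,c],[0,0,1]]` over ℤ and `s := M⁻¹ * Mᵀ` over ℚ,
`s` is unipotent (`(s - 1)³ = 0`) iff `a² + b² + c² − abc = 0`. -/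
theorem markov_rank3 (a b c : ℤ) (M : Matrix (Fin 3) (Fin 3) ℚ)
    (hM : M = !![1, (a : ℚ), (b : ℚ); 0, 1, (c : ℚ); 0, 0, 1])
    (s : Matrix (Fin 3) (Fin 3) ℚ) (hs : s = M⁻¹ * Mᵀ) :
    (s - 1) ^ 3 = 0 ↔ a ^ 2 + b ^ 2 + c ^ 2 - a * b * c = 0 := by
  have hMinv : M⁻¹ = !![1, -(a:ℚ), (a:ℚ)*c - b; 0, 1, -(c:ℚ); 0, 0, 1] := by
    apply inv_eq_right_inv
    rw [hM, Matrix.mul_fin_three, Matrix.one_fin_three]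
    ext i j
    fin_cases i <;> fin_cases j <;> simp [Matrix.vecHead, Matrix.vecTail] <;> ring
  have hsE : s = !![1 - (b:ℚ)^2 + a*b*c - a^2, -(b:ℚ)*c - a + a*c^2, -(b:ℚ) + a*c;
                    -(b:ℚ)*c + a, 1 - (c:ℚ)^2, -(c:ℚ);
                    (b:ℚ), (c:ℚ), 1] := by
    rw [hs, hMinv, hM]
    have hT : (!![1, (a : ℚ), (b : ℚ); 0, 1, (c : ℚ); 0, 0, 1])ᵀ =
        !![1, 0, 0; (a:ℚ), 1, 0; (b:ℚ), (c:ℚ), 1] := by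
      ext i j
      fin_cases i <;> fin_cases j <;> simp [Matrix.vecHead, Matrix.vecTail]
    rw [hT, Matrix.mul_fin_three]
    ext i j
    fin_cases i <;> fin_cases j <;> simp [Matrix.vecHead, Matrix.vecTail] <;> ring
  set Q : ℚ := (a:ℚ)^2 + b^2 + c^2 - a*b*c with hQdef
  have hT : s - 1 = !![-(b:ℚ)^2 + (a:ℚ)*(b:ℚ)*(c:ℚ) - (a:ℚ)^2, -(b:ℚ)*(c:ℚ) - (a:ℚ) + (a:ℚ)*(c:ℚ)^2, -(b:ℚ) + (a:ℚ)*(c:ℚ);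
        -(b:ℚ)*(c:ℚ) + (a:ℚ), -(c:ℚ)^2, -(c:ℚ);
        (b:ℚ), (c:ℚ), 0] := by
    rw [hsE, Matrix.one_fin_three]
    ext i j
    fin_cases i <;> fin_cases j <;> simp [Matrix.vecHead, Matrix.vecTail] <;> ring
  have hT2 : (s - 1) * (s - 1) = !![-(b:ℚ)^2 + (b:ℚ)^2*(c:ℚ)^2 + (b:ℚ)^4 + (a:ℚ)*(b:ℚ)*(c:ℚ) - (a:ℚ)*(b:ℚ)*(c:ℚ)^3 - 2*(a:ℚ)*(b:ℚ)^3*(c:ℚ) - (a:ℚ)^2 + (a:ℚ)^2*(c:ℚ)^2 + 2*(a:ℚ)^2*(b:ℚ)^2 + (a:ℚ)^2*(b:ℚ)^2*(c:ℚ)^2 - 2*(a:ℚ)^3*(b:ℚ)*(c:ℚ) + (a:ℚ)^4, -(b:ℚ)*(c:ℚ) + (b:ℚ)*(c:ℚ)^3 + (b:ℚ)^3*(c:ℚ) + 2*(a:ℚ)*(c:ℚ)^2 - (a:ℚ)*(c:ℚ)^4 + (a:ℚ)*(b:ℚ)^2 - 2*(a:ℚ)*(b:ℚ)^2*(c:ℚ)^2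 + (a:ℚ)^2*(b:ℚ)*(c:ℚ)^3 + (a:ℚ)^3 - (a:ℚ)^3*(c:ℚ)^2, (b:ℚ)*(c:ℚ)^2 + (b:ℚ)^3 + (a:ℚ)*(c:ℚ) - (a:ℚ)*(c:ℚ)^3 - 2*(a:ℚ)*(b:ℚ)^2*(c:ℚ) + (a:ℚ)^2*(b:ℚ) + (a:ℚ)^2*(b:ℚ)*(c:ℚ)^2 - (a:ℚ)^3*(c:ℚ);
        -(b:ℚ)*(c:ℚ) + (b:ℚ)*(c:ℚ)^3 + (b:ℚ)^3*(c:ℚ) - (a:ℚ)*(c:ℚ)^2 - (a:ℚ)*(b:ℚ)^2 - (a:ℚ)*(b:ℚ)^2*(c:ℚ)^2 + 2*(a:ℚ)^2*(b:ℚ)*(c:ℚ) - (a:ℚ)^3, -(c:ℚ)^2 + (c:ℚ)^4 + (b:ℚ)^2*(c:ℚ)^2 - (a:ℚ)*(b:ℚ)*(c:ℚ)^3 - (a:ℚ)^2 + (a:ℚ)^2*(c:ℚ)^2, (c:ℚ)^3 + (b:ℚ)^2*(c:ℚ) - (a:ℚ)*(b:ℚ) - (a:ℚ)*(b:ℚ)*(c:ℚ)^2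 + (a:ℚ)^2*(c:ℚ);
        -(b:ℚ)*(c:ℚ)^2 - (b:ℚ)^3 + (a:ℚ)*(c:ℚ) + (a:ℚ)*(b:ℚ)^2*(c:ℚ) - (a:ℚ)^2*(b:ℚ), -(c:ℚ)^3 - (b:ℚ)^2*(c:ℚ) - (a:ℚ)*(b:ℚ) + (a:ℚ)*(b:ℚ)*(c:ℚ)^2, -(c:ℚ)^2 - (b:ℚ)^2 + (a:ℚ)*(b:ℚ)*(c:ℚ)] := by
    rw [hT, Matrix.mul_fin_three]
    ext i j
    fin_cases i <;> fin_cases j <;> simp [Matrix.vecHead, Matrix.vecTail] <;> ring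
  have hS2 : s * s = !![1 - 3*(b:ℚ)^2 + (b:ℚ)^2*(c:ℚ)^2 + (b:ℚ)^4 + 3*(a:ℚ)*(b:ℚ)*(c:ℚ) - (a:ℚ)*(b:ℚ)*(c:ℚ)^3 - 2*(a:ℚ)*(b:ℚ)^3*(c:ℚ) - 3*(a:ℚ)^2 + (a:ℚ)^2*(c:ℚ)^2 + 2*(a:ℚ)^2*(b:ℚ)^2 + (a:ℚ)^2*(b:ℚ)^2*(c:ℚ)^2 - 2*(a:ℚ)^3*(b:ℚ)*(c:ℚ) + (a:ℚ)^4, -3*(b:ℚ)*(c:ℚ) + (b:ℚ)*(c:ℚ)^3 + (b:ℚ)^3*(c:ℚ) - 2*(a:ℚ) + 4*(a:ℚ)*(c:ℚ)^2 - (a:ℚ)*(c:ℚ)^4 + (a:ℚ)*(b:ℚ)^2 - 2*(a:ℚ)*(b:ℚ)^2*(c:ℚ)^2 + (a:ℚ)^2*(b:ℚ)*(c:ℚ)^3 + (a:ℚ)^3 - (a:ℚ)^3*(c:ℚ)^2, -2*(b:ℚ) + (b:ℚ)*(c:ℚ)^2 + (b:ℚ)^3 + 3*(a:ℚ)*(c:ℚ)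 - (a:ℚ)*(c:ℚ)^3 - 2*(a:ℚ)*(b:ℚ)^2*(c:ℚ) + (a:ℚ)^2*(b:ℚ) + (a:ℚ)^2*(b:ℚ)*(c:ℚ)^2 - (a:ℚ)^3*(c:ℚ);
        -3*(b:ℚ)*(c:ℚ) + (b:ℚ)*(c:ℚ)^3 + (b:ℚ)^3*(c:ℚ) + 2*(a:ℚ) - (a:ℚ)*(c:ℚ)^2 - (a:ℚ)*(b:ℚ)^2 - (a:ℚ)*(b:ℚ)^2*(c:ℚ)^2 + 2*(a:ℚ)^2*(b:ℚ)*(c:ℚ) - (a:ℚ)^3, 1 - 3*(c:ℚ)^2 + (c:ℚ)^4 + (b:ℚ)^2*(c:ℚ)^2 - (a:ℚ)*(b:ℚ)*(c:ℚ)^3 - (a:ℚ)^2 + (a:ℚ)^2*(c:ℚ)^2, -2*(c:ℚ) + (c:ℚ)^3 + (b:ℚ)^2*(c:ℚ) - (a:ℚ)*(b:ℚ) - (a:ℚ)*(b:ℚ)*(c:ℚ)^2 + (a:ℚ)^2*(c:ℚ);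
        2*(b:ℚ) - (b:ℚ)*(c:ℚ)^2 - (b:ℚ)^3 + (a:ℚ)*(c:ℚ) + (a:ℚ)*(b:ℚ)^2*(c:ℚ) - (a:ℚ)^2*(b:ℚ), 2*(c:ℚ) - (c:ℚ)^3 - (b:ℚ)^2*(c:ℚ) - (a:ℚ)*(b:ℚ) + (a:ℚ)*(b:ℚ)*(c:ℚ)^2, 1 - (c:ℚ)^2 - (b:ℚ)^2 + (a:ℚ)*(b:ℚ)*(c:ℚ)] := by
    rw [hsE, Matrix.mul_fin_three]
    ext i j
    fin_cases i <;> fin_cases j <;> simp [Matrix.vecHead, Matrix.vecTail] <;> ring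
  have key : (s - 1)^3 = (-Q) • (s*s - s) := by
    have hp : (s - 1)^3 = ((s - 1) * (s - 1)) * (s - 1) := by
      rw [pow_succ, pow_succ, pow_one]
    rw [hp, hT2, hT, Matrix.mul_fin_three, hS2]
    rw [hsE]
    ext i j
    fin_cases i <;> fin_cases j <;>
      simp [Matrix.sub_apply, Matrix.smul_apply, Matrix.vecHead, Matrix.vecTail, hQdef,
        smul_eq_mul] <;> ring
  constructor
  · intro hE
    have hQ0 : Q = 0 := by
      by_contra hQ
      have hss' : s * s - s = 0 := by
        rw [hE] at key
        have := key.symm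
        rwa [smul_eq_zero, neg_eq_zero, or_iff_right hQ] at this
      have hss : s * s = s := by rwa [sub_eq_zero] at hss'
      -- s has a right inverse, hence s = 1
      have hinv : s * !![1, (a:ℚ), (b:ℚ);
                         -(a:ℚ), 1 - (a:ℚ)^2, (c:ℚ) - a*b;
                         (a:ℚ)*c - b, (a:ℚ)^2*c - a*b - c, (a:ℚ)*b*c - b^2 - c^2 + 1] = 1 := by
        rw [hsE, Matrix.mul_fin_three, Matrix.one_fin_three]
        ext i j
        fin_cases i <;> fin_cases j <;> simp [Matrix.vecHead, Matrix.vecTail] <;> ring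
      set N : Matrix (Fin 3) (Fin 3) ℚ :=
        !![1, (a:ℚ), (b:ℚ);
           -(a:ℚ), 1 - (a:ℚ)^2, (c:ℚ) - a*b;
           (a:ℚ)*c - b, (a:ℚ)^2*c - a*b - c, (a:ℚ)*b*c - b^2 - c^2 + 1] with hN
      have hs1 : s = 1 := by
        calc s = s * (s * N) := by rw [hinv, mul_one]
        _ = (s * s) * N := by rw [mul_assoc]
        _ = s * N := by rw [hss]
        _ = 1 := hinv
      rw [hsE] at hs1
      have hb : (b:ℚ) = 0 := by
        have := congrFun (congrFun hs1 2) 0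
        simpa [Matrix.one_apply] using this
      have hc : (c:ℚ) = 0 := by
        have := congrFun (congrFun hs1 2) 1
        simpa [Matrix.one_apply] using this
      have ha : (a:ℚ) = 0 := by
        have := congrFun (congrFun hs1 1) 0
        simpa [Matrix.one_apply, hb, hc] using this
      apply hQ
      rw [hQdef, ha, hb, hc]; ring
    have : ((a ^ 2 + b ^ 2 + c ^ 2 - a * b * c : ℤ) : ℚ) = 0 := by
      push_cast
      linarith [hQ0]
    exact_mod_cast this
  · intro h
    have hq : Q = 0 := by
      have : ((a ^ 2 + b ^ 2 + c ^ 2 - a * b * c : ℤ) : ℚ) = 0 := by exact_mod_cast h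
      push_cast at this
      rw [hQdef]; linarith [this]
    rw [key, hq, neg_zero, zero_smul]
end

section
/- Let (V, ⟨−,−⟩, s) be a Serre lattice over ℚ with dim V ≤ 4. If s is unipotent, then rank(s − 1) ≤ 2 (i.e. the image of the linear map s − 1 has dimension at most 2). -/
/-! The form `(v, w) ↦ ⟨v, (s - 1) w⟩` is skew-symmetric by the Serre relation, and since `⟨−,−⟩`
is nondegenerate its radical is `ker (s - 1)`. A skew form is nondegenerate on a complement of its
radical, and a nondegenerate skew form lives in even dimension (a skew Gram matrix of odd size has
determinant zero), so `rank (s - 1)` is even. Unipotence makes `s - 1` nilpotent, so for `V ≠ 0`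
this rank is below `dim V ≤ 4`, hence at most 2. -/

open Module LinearMap
open scoped Matrix

section Forms

variable {K V : Type*} [Field K] [AddCommGroup V] [Module K V] [FiniteDimensional K V]

theorem LinearMap.SeparatingLeft.separatingRight {B : V →ₗ[K] V →ₗ[K] K}
    (hB : B.SeparatingLeft) : B.SeparatingRight := by
  classical
  let b := finBasis K V
  exact (separatingRight_iff_det_ne_zero b).mpr ((separatingLeft_iff_det_ne_zero b).mp hB)

theorem even_finrank_of_separatingLeft_of_skew [NeZero (2 : K)] {A : V →ₗ[K] V →ₗ[K] K}
    (hA : A.SeparatingLeft) (hskew : ∀ x y, A x y = -A y x) : Even (finrank K V) := by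
  classical
  let b := finBasis K V
  set M := toMatrix₂ b b A
  have hM : Mᵀ = -M := by
    ext i j
    simp only [M, Matrix.transpose_apply, Matrix.neg_apply, toMatrix₂_apply, hskew (b j)]
  by_contra hodd
  have hdet : M.det = -M.det :=
    calc M.det = Mᵀ.det := M.det_transpose.symm
      _ = -M.det := by
        rw [hM, Matrix.det_neg, Fintype.card_fin, (Nat.not_even_iff_odd.mp hodd).neg_one_pow,
          neg_one_mul]
  have htwice : (2 : K) * M.det = 0 := by linear_combination hdet
  exact (separatingLeft_iff_det_ne_zero b).mp hA ((mul_eq_zero.mp htwice).resolve_left two_ne_zero)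

theorem LinearMap.IsRefl.separatingLeft_domRestrict₁₂_of_isCompl_ker {R M : Type*} [CommRing R]
    [AddCommGroup M] [Module R M] {A : M →ₗ[R] M →ₗ[R] R} (hA : A.IsRefl) {W : Submodule R M}
    (hW : IsCompl W (ker A)) : (A.domRestrict₁₂ W W).SeparatingLeft := by
  rintro ⟨x, hxW⟩ hx
  suffices hxker : x ∈ ker A by simpa using (Submodule.disjoint_def.mp hW.disjoint) x hxW hxker
  ext z
  have hz : z ∈ W ⊔ ker A := hW.sup_eq_top ▸ Submodule.mem_top
  obtain ⟨u, hu, k, hk, rfl⟩ := Submodule.mem_sup.mp hz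
  have hku : A x k = 0 := hA k x (by simp [mem_ker.mp hk])
  have hxu : A x u = 0 := hx ⟨u, hu⟩
  simp [hxu, hku]

theorem even_finrank_range_of_skew [NeZero (2 : K)] {A : V →ₗ[K] V →ₗ[K] K}
    (hskew : ∀ x y, A x y = -A y x) : Even (finrank K (range A)) := by
  obtain ⟨W, hW⟩ := (ker A).exists_isCompl
  have hrank : finrank K (range A) = finrank K W := by
    have := A.finrank_range_add_finrank_ker
    have := Submodule.finrank_add_eq_of_isCompl hW
    omega
  have hrefl : A.IsRefl := fun x y h => by rw [hskew, h, neg_zero]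
  rw [hrank]
  exact even_finrank_of_separatingLeft_of_skew
    (hrefl.separatingLeft_domRestrict₁₂_of_isCompl_ker hW.symm) fun x y => hskew x y

theorem finrank_range_lt_of_isNilpotent [Nontrivial V] {N : Module.End K V}
    (hN : IsNilpotent N) : finrank K (range N) < finrank K V :=
  Submodule.finrank_lt fun h => hN.not_isUnit <| (Module.End.isUnit_iff N).mpr
    ⟨N.injective_iff_surjective.mpr (range_eq_top.mp h), range_eq_top.mp h⟩

end Forms

section Serre

variable {K V : Type*} [Field K] [AddCommGroup V] [Module K V]
  {B : V →ₗ[K] V →ₗ[K] K} {s : V →ₗ[K] V}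

theorem compl₂_sub_one_skew_of_serre (hserre : ∀ v w, B v (s w) = B w v) (v w : V) :
    B.compl₂ (s - 1) v w = -B.compl₂ (s - 1) w v := by
  simp only [compl₂_apply, LinearMap.sub_apply, Module.End.one_apply, map_sub, hserre]
  ring

theorem ker_compl₂_sub_one_of_serre [FiniteDimensional K V] (hB : B.SeparatingLeft)
    (hserre : ∀ v w, B v (s w) = B w v) : ker (B.compl₂ (s - 1)) = ker (s - 1) := by
  ext v
  refine ⟨fun hv => hB.separatingRight _ fun w => ?_, fun hv => ?_⟩
  · rw [← neg_eq_zero, ← compl₂_apply, ← compl₂_sub_one_skew_of_serre hserre]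
    exact LinearMap.congr_fun (mem_ker.mp hv) w
  · ext w
    rw [compl₂_sub_one_skew_of_serre hserre, compl₂_apply, mem_ker.mp hv, map_zero, neg_zero,
      LinearMap.zero_apply]

theorem even_finrank_range_sub_one_of_serre [FiniteDimensional K V] [NeZero (2 : K)]
    (hB : B.SeparatingLeft) (hserre : ∀ v w, B v (s w) = B w v) :
    Even (finrank K (range (s - 1))) := by
  have hA := (B.compl₂ (s - 1)).finrank_range_add_finrank_ker
  have hN := (s - 1).finrank_range_add_finrank_ker
  rw [ker_compl₂_sub_one_of_serre hB hserre] at hA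
  rw [show finrank K (range (s - 1)) = finrank K (range (B.compl₂ (s - 1))) by omega]
  exact even_finrank_range_of_skew (compl₂_sub_one_skew_of_serre hserre)

end Serre

theorem rank_le_two_of_unipotent_general (V : Type*) [AddCommGroup V] [Module ℚ V]
    [FiniteDimensional ℚ V]
    (B : V →ₗ[ℚ] V →ₗ[ℚ] ℚ) (hB : ∀ v, (∀ w, B v w = 0) → v = 0)
    (s : V →ₗ[ℚ] V)
    (hserre : ∀ v w, B v (s w) = B w v)
    (hdim : Module.finrank ℚ V ≤ 4)
    (huni : (s - 1) ^ Module.finrank ℚ V = 0) :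
    Module.finrank ℚ (LinearMap.range (s - 1)) ≤ 2 := by
  obtain ⟨r, hr⟩ := even_finrank_range_sub_one_of_serre hB hserre
  rcases subsingleton_or_nontrivial V with _ | _
  · have := (s - 1).finrank_range_le
    have := finrank_zero_of_subsingleton (R := ℚ) (M := V)
    omega
  · have := finrank_range_lt_of_isNilpotent ⟨_, huni⟩
    omega

/-- a Serre lattice over ℚ of dimension at most 4 with unipotent Serre
automorphism satisfies `rank(s − 1) ≤ 2`. -/
theorem rank_le_two_of_unipotent (V : Type*) [AddCommGroup V] [Module ℚ V]
    [FiniteDimensional ℚ V]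
    (B : V →ₗ[ℚ] V →ₗ[ℚ] ℚ) (hB : ∀ v, (∀ w, B v w = 0) → v = 0)
    (s : V →ₗ[ℚ] V) (hbij : Function.Bijective s)
    (hserre : ∀ v w, B v (s w) = B w v)
    (hdim : Module.finrank ℚ V ≤ 4)
    (huni : (s - 1) ^ Module.finrank ℚ V = 0) :
    Module.finrank ℚ (LinearMap.range (s - 1)) ≤ 2 :=
  rank_le_two_of_unipotent_general V B hB s hserre hdim huni
end

section
/- Let (V, ⟨−,−⟩, s) be a Serre lattice over ℚ of surface* type. Then (s − 1)³ = 0, rank(s − 1) = 2 and rank((s − 1)²) = 1; equivalently, the Jordan blocks of s (all with eigenvalue 1) have sizes (3, 1, …, 1). -/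
private lemma range_pow_stab {V : Type*} [AddCommGroup V] [Module ℚ V]
    (f : V →ₗ[ℚ] V) (k : ℕ)
    (h : LinearMap.range (f ^ (k + 1)) = LinearMap.range (f ^ k)) :
    ∀ m, LinearMap.range (f ^ (k + m)) = LinearMap.range (f ^ k) := by
  intro m
  induction m with
  | zero => rfl
  | succ m ih =>
      have e1 : f ^ (k + (m + 1)) = f * f ^ (k + m) := by
        rw [← pow_succ']; ring_nf
      have e2 : f ^ (k + 1) = f * f ^ k := by rw [← pow_succ']
      calc LinearMap.range (f ^ (k + (m + 1)))
          = Submodule.map f (LinearMap.range (f ^ (k + m))) := by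
            rw [e1, Module.End.mul_eq_comp, LinearMap.range_comp]
        _ = Submodule.map f (LinearMap.range (f ^ k)) := by rw [ih]
        _ = LinearMap.range (f ^ (k + 1)) := by
            rw [e2, Module.End.mul_eq_comp, LinearMap.range_comp]
        _ = LinearMap.range (f ^ k) := h

private lemma range_pow_succ_le {V : Type*} [AddCommGroup V] [Module ℚ V]
    (f : V →ₗ[ℚ] V) (k : ℕ) :
    LinearMap.range (f ^ (k + 1)) ≤ LinearMap.range (f ^ k) := by
  rw [pow_succ, Module.End.mul_eq_comp]
  exact LinearMap.range_comp_le_range _ _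

private lemma range_pow_lt {V : Type*} [AddCommGroup V] [Module ℚ V]
    [FiniteDimensional ℚ V]
    (f : V →ₗ[ℚ] V) (k : ℕ) (hn : f ^ Module.finrank ℚ V = 0)
    (hk : f ^ k ≠ 0) (hkn : k ≤ Module.finrank ℚ V) :
    LinearMap.range (f ^ (k + 1)) < LinearMap.range (f ^ k) := by
  refine lt_of_le_of_ne (range_pow_succ_le f k) ?_
  intro h
  have := range_pow_stab f k h (Module.finrank ℚ V - k)
  rw [Nat.add_sub_cancel' hkn, hn] at this
  apply hk
  rw [← LinearMap.range_eq_bot, ← this, LinearMap.range_eq_bot]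

/-- for a Serre lattice over ℚ of surface* type, the Jordan blocks of `s`
have sizes `(3, 1, …, 1)`: `(s − 1)³ = 0`, `rank(s − 1) = 2` and `rank((s − 1)²) = 1`. -/
theorem jordan_blocks_surface_star (V : Type*) [AddCommGroup V] [Module ℚ V]
    [FiniteDimensional ℚ V]
    (B : V →ₗ[ℚ] V →ₗ[ℚ] ℚ) (hB : ∀ v, (∀ w, B v w = 0) → v = 0)
    (s : V →ₗ[ℚ] V) (hbij : Function.Bijective s)
    (hserre : ∀ v w, B v (s w) = B w v)
    (huni : (s - 1) ^ Module.finrank ℚ V = 0)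
    (hrank : Module.finrank ℚ (LinearMap.range (s - 1)) ≤ 2)
    (hstar : (s - 1) ^ 2 ≠ 0) :
    (s - 1) ^ 3 = 0 ∧
      Module.finrank ℚ (LinearMap.range (s - 1)) = 2 ∧
      Module.finrank ℚ (LinearMap.range ((s - 1) ^ 2)) = 1 := by
  set N := s - 1 with hN
  set n := Module.finrank ℚ V with hn
  have hN1 : N ^ 1 ≠ 0 := by
    intro h
    apply hstar
    rw [pow_two, show N = 0 from by simpa using h]
    simp
  -- finrank V ≥ 2: since range N² ≠ ⊥ and range N² < range N ≤ V... simpler: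
  have h2n : 2 ≤ n := by
    by_contra h
    push_neg at h
    interval_cases n
    · exact hN1 (by rw [pow_one, ← mul_one N, ← pow_zero N, huni, mul_zero])
    · exact hstar (by rw [show (2:ℕ) = 1 + 1 from rfl, pow_add, huni, zero_mul])
  have h1n : 1 ≤ n := le_trans (by norm_num) h2n
  -- rank N² < rank N
  have hlt1 : LinearMap.range (N ^ 2) < LinearMap.range (N ^ 1) :=
    range_pow_lt N 1 huni hN1 h1n
  have hr1 : LinearMap.range (N ^ 1) = LinearMap.range N := by rw [pow_one]
  have hfin1 : Module.finrank ℚ (LinearMap.range (N ^ 2)) <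
      Module.finrank ℚ (LinearMap.range N) := by
    rw [← hr1]; exact Submodule.finrank_lt_finrank_of_lt hlt1
  have hpos2 : 1 ≤ Module.finrank ℚ (LinearMap.range (N ^ 2)) := by
    rw [Nat.one_le_iff_ne_zero]
    intro h
    apply hstar
    rw [← LinearMap.range_eq_bot]
    exact Submodule.finrank_eq_zero.mp h
  have hrank1 : Module.finrank ℚ (LinearMap.range N) = 2 :=
    le_antisymm hrank (lt_of_le_of_lt hpos2 hfin1)
  have hrank2 : Module.finrank ℚ (LinearMap.range (N ^ 2)) = 1 := by omega
  -- N³ = 0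
  have hlt2 : LinearMap.range (N ^ 3) < LinearMap.range (N ^ 2) :=
    range_pow_lt N 2 huni hstar h2n
  have hfin2 : Module.finrank ℚ (LinearMap.range (N ^ 3)) <
      Module.finrank ℚ (LinearMap.range (N ^ 2)) :=
    Submodule.finrank_lt_finrank_of_lt hlt2
  have h3 : N ^ 3 = 0 := by
    rw [← LinearMap.range_eq_bot, ← Submodule.finrank_eq_zero]
    omega
  exact ⟨h3, hrank1, hrank2⟩
end

section
/- Let (V, ⟨−,−⟩, s) be a Serre lattice over ℚ of surface* type, n = dim V, and set F¹V := ker((s−1)²), F²V := im((s−1)²). Then F²V ⊆ F¹V, (s − 1)(V) ⊆ F¹V, (s − 1)(F¹V) = F²V (in particular (s−1)(F¹V) ⊆ F²V and (s−1)(F²V) = 0), dim F¹V = n − 1 and dim F²V = 1. -/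
/-!
For the nilpotent endomorphism `N = s - 1` the ranks of `N, N², N³, …` strictly decrease until
they reach `0`, so `rank N ≤ 2` and `N² ≠ 0` force `rank N = 2`, `rank N² = 1` and `N³ = 0`.
Everything else is rank–nullity: `ker N ⊆ ker N²` has codimension one, so `N` maps
`ker N²` onto a line, which contains (hence is) `im N² = N(im N)`.
-/

open Module LinearMap

theorem range_le_ker_sq_of_pow_three_eq_zero {R M : Type*} [Semiring R] [AddCommMonoid M]
    [Module R M] {f : End R M} (hcube : f ^ 3 = 0) : range f ≤ ker (f ^ 2) := by
  rwa [range_le_ker_iff, ← End.mul_eq_comp, ← pow_succ]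

section

variable {K V W : Type*} [Field K] [AddCommGroup V] [Module K V] [FiniteDimensional K V]
  [AddCommGroup W] [Module K W]

theorem finrank_map_add_finrank_ker_of_ker_le {f : V →ₗ[K] W} {p : Submodule K V}
    (hp : ker f ≤ p) : finrank K (p.map f) + finrank K (ker f) = finrank K p := by
  have hker : ker (f.domRestrict p) = (ker f).comap p.subtype := ker_domRestrict p f
  rw [← range_domRestrict, ← (Submodule.comapSubtypeEquivOfLe hp).finrank_eq, ← hker]
  exact finrank_range_add_finrank_ker _

theorem finrank_range_pow_succ_lt {f : End K V} (hf : IsNilpotent f) {k : ℕ} (hk : f ^ k ≠ 0) :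
    finrank K (range (f ^ (k + 1))) < finrank K (range (f ^ k)) := by
  have hle : range (f ^ (k + 1)) ≤ range (f ^ k) := (iterateRange f).monotone k.le_succ
  refine (Submodule.finrank_mono hle).lt_of_ne fun heq => hk ?_
  have hstable : ∀ m, range (f ^ (k + m)) = range (f ^ k) := by
    intro m
    induction m with
    | zero => rfl
    | succ m ih =>
      rw [← add_assoc, pow_succ', End.mul_eq_comp, range_comp, ih, ← range_comp,
        ← End.mul_eq_comp, ← pow_succ']
      exact Submodule.eq_of_le_of_finrank_eq hle heq
  obtain ⟨m, hm⟩ := hf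
  rw [← range_eq_bot, ← hstable m, pow_add, hm, mul_zero, range_zero]

theorem finrank_range_eq_two_and_finrank_range_sq_eq_one {f : End K V} (hf : IsNilpotent f)
    (hrank : finrank K (range f) ≤ 2) (hsq : f ^ 2 ≠ 0) :
    finrank K (range f) = 2 ∧ finrank K (range (f ^ 2)) = 1 := by
  have hne : f ^ 1 ≠ 0 := fun h => hsq (pow_eq_zero_of_le one_le_two h)
  have hlt : finrank K (range (f ^ 2)) < finrank K (range (f ^ 1)) :=
    finrank_range_pow_succ_lt hf hne
  have hpos : finrank K (range (f ^ 2)) ≠ 0 := by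
    rwa [Ne, Submodule.finrank_eq_zero, range_eq_bot]
  rw [pow_one] at hlt
  omega

theorem pow_three_eq_zero_of_finrank_range_le_two {f : End K V} (hf : IsNilpotent f)
    (hrank : finrank K (range f) ≤ 2) (hsq : f ^ 2 ≠ 0) : f ^ 3 = 0 := by
  have hlt : finrank K (range (f ^ 3)) < finrank K (range (f ^ 2)) :=
    finrank_range_pow_succ_lt hf hsq
  have h1 := (finrank_range_eq_two_and_finrank_range_sq_eq_one hf hrank hsq).2
  rw [← range_eq_bot, ← Submodule.finrank_eq_zero]
  omega

theorem finrank_ker_sq_of_finrank_range_le_two {f : End K V} (hf : IsNilpotent f)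
    (hrank : finrank K (range f) ≤ 2) (hsq : f ^ 2 ≠ 0) :
    finrank K (ker (f ^ 2)) = finrank K V - 1 := by
  have h1 := (finrank_range_eq_two_and_finrank_range_sq_eq_one hf hrank hsq).2
  have := finrank_range_add_finrank_ker (f ^ 2)
  omega

theorem map_ker_sq_eq_range_sq {f : End K V} (hf : IsNilpotent f)
    (hrank : finrank K (range f) ≤ 2) (hsq : f ^ 2 ≠ 0) :
    (ker (f ^ 2)).map f = range (f ^ 2) := by
  obtain ⟨hrk1, hrk2⟩ := finrank_range_eq_two_and_finrank_range_sq_eq_one hf hrank hsq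
  have hle : range (f ^ 2) ≤ (ker (f ^ 2)).map f := by
    rw [sq, End.mul_eq_comp, range_comp]
    exact Submodule.map_mono <| range_le_ker_sq_of_pow_three_eq_zero <|
      pow_three_eq_zero_of_finrank_range_le_two hf hrank hsq
  have hdim := finrank_map_add_finrank_ker_of_ker_le (ker_le_ker_comp f f)
  rw [← End.mul_eq_comp, ← sq, finrank_ker_sq_of_finrank_range_le_two hf hrank hsq] at hdim
  have := finrank_range_add_finrank_ker f
  exact (Submodule.eq_of_le_of_finrank_le hle (by omega)).symm

end

theorem codimension_filtration_general (V : Type*) [AddCommGroup V] [Module ℚ V]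
    [FiniteDimensional ℚ V]
    (s : V →ₗ[ℚ] V)
    (huni : (s - 1) ^ Module.finrank ℚ V = 0)
    (hrank : Module.finrank ℚ (LinearMap.range (s - 1)) ≤ 2)
    (hstar : (s - 1) ^ 2 ≠ 0) :
    LinearMap.range ((s - 1) ^ 2) ≤ LinearMap.ker ((s - 1) ^ 2) ∧
      LinearMap.range (s - 1) ≤ LinearMap.ker ((s - 1) ^ 2) ∧
      Submodule.map (s - 1) (LinearMap.ker ((s - 1) ^ 2)) = LinearMap.range ((s - 1) ^ 2) ∧
      Submodule.map (s - 1) (LinearMap.range ((s - 1) ^ 2)) = ⊥ ∧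
      Module.finrank ℚ (LinearMap.ker ((s - 1) ^ 2)) = Module.finrank ℚ V - 1 ∧
      Module.finrank ℚ (LinearMap.range ((s - 1) ^ 2)) = 1 := by
  set N := s - 1
  have hnil : IsNilpotent N := ⟨_, huni⟩
  have hcube : N ^ 3 = 0 := pow_three_eq_zero_of_finrank_range_le_two hnil hrank hstar
  refine ⟨?_, range_le_ker_sq_of_pow_three_eq_zero hcube,
    map_ker_sq_eq_range_sq hnil hrank hstar, ?_,
    finrank_ker_sq_of_finrank_range_le_two hnil hrank hstar,
    (finrank_range_eq_two_and_finrank_range_sq_eq_one hnil hrank hstar).2⟩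
  · rw [range_le_ker_iff, ← End.mul_eq_comp, ← pow_add]
    exact pow_eq_zero_of_le (by norm_num) hcube
  · rw [← range_comp, ← End.mul_eq_comp, ← pow_succ', hcube, range_zero]

/-- the codimension filtration `F¹V := ker((s−1)²)`, `F²V := im((s−1)²)` of a
Serre lattice over ℚ of surface* type satisfies `F²V ⊆ F¹V`, `(s−1)(V) ⊆ F¹V`,
`(s−1)(F¹V) = F²V` (in particular `(s−1)(F²V) = 0`), `dim F¹V = n − 1` and `dim F²V = 1`. -/
theorem codimension_filtration (V : Type*) [AddCommGroup V] [Module ℚ V]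
    [FiniteDimensional ℚ V]
    (B : V →ₗ[ℚ] V →ₗ[ℚ] ℚ) (hB : ∀ v, (∀ w, B v w = 0) → v = 0)
    (s : V →ₗ[ℚ] V) (hbij : Function.Bijective s)
    (hserre : ∀ v w, B v (s w) = B w v)
    (huni : (s - 1) ^ Module.finrank ℚ V = 0)
    (hrank : Module.finrank ℚ (LinearMap.range (s - 1)) ≤ 2)
    (hstar : (s - 1) ^ 2 ≠ 0) :
    LinearMap.range ((s - 1) ^ 2) ≤ LinearMap.ker ((s - 1) ^ 2) ∧
      LinearMap.range (s - 1) ≤ LinearMap.ker ((s - 1) ^ 2) ∧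
      Submodule.map (s - 1) (LinearMap.ker ((s - 1) ^ 2)) = LinearMap.range ((s - 1) ^ 2) ∧
      Submodule.map (s - 1) (LinearMap.range ((s - 1) ^ 2)) = ⊥ ∧
      Module.finrank ℚ (LinearMap.ker ((s - 1) ^ 2)) = Module.finrank ℚ V - 1 ∧
      Module.finrank ℚ (LinearMap.range ((s - 1) ^ 2)) = 1 :=
  codimension_filtration_general V s huni hrank hstar
end

section
/- Let (V, ⟨−,−⟩, s) be a Serre lattice over ℚ of surface* type. Suppose G² ⊆ G¹ ⊆ V are subspaces with (s − 1)(V) ⊆ G¹, (s − 1)(G¹) ⊆ G², (s − 1)(G²) = 0, dim(V/G¹) = 1 and dim G² = 1. Then G¹ = ker((s−1)²) and G² = im((s−1)²). -/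
/-! With `N = s - 1`, the filtration conditions give `G¹ ≤ ker N²` and `im N² ≤ G²`. Since
`N² ≠ 0`, `ker N²` is a proper subspace and `im N²` a nonzero one, so the codimension of `G¹`
and the dimension of `G²` leave no room between the two sides. -/

namespace Module.End

variable {R M : Type*} [Semiring R] [AddCommMonoid M] [Module R M] {N : Module.End R M}
  {F₁ F₂ : Submodule R M}

theorem le_ker_sq_of_map_le (h₁₂ : F₁.map N ≤ F₂) (h₂ : F₂.map N = ⊥) :
    F₁ ≤ LinearMap.ker (N ^ 2) := by
  rw [pow_two, Module.End.mul_eq_comp, LinearMap.ker_comp, ← Submodule.map_le_iff_le_comap]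
  exact h₁₂.trans (LinearMap.le_ker_iff_map.mpr h₂)

theorem range_sq_le_of_map_le (h₁ : LinearMap.range N ≤ F₁) (h₁₂ : F₁.map N ≤ F₂) :
    LinearMap.range (N ^ 2) ≤ F₂ := by
  rw [pow_two, Module.End.mul_eq_comp, LinearMap.range_comp]
  exact (Submodule.map_mono h₁).trans h₁₂

end Module.End

namespace Submodule

variable {K V : Type*} [DivisionRing K] [AddCommGroup V] [Module K V] [FiniteDimensional K V]
  {U W : Submodule K V}

theorem eq_of_le_of_finrank_quotient_eq_one (hWU : W ≤ U) (hU : U ≠ ⊤)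
    (hW : Module.finrank K (V ⧸ W) = 1) : W = U := by
  have hsum := W.finrank_quotient_add_finrank
  have hlt := Submodule.finrank_lt hU
  exact eq_of_le_of_finrank_le hWU (by omega)

theorem eq_of_le_of_finrank_eq_one (hUW : U ≤ W) (hU : U ≠ ⊥)
    (hW : Module.finrank K W = 1) : U = W :=
  eq_of_le_of_finrank_le hUW <| hW ▸ Nat.one_le_iff_ne_zero.mpr (by rwa [Ne, finrank_eq_zero])

end Submodule

theorem codimension_filtration_unique_general (V : Type*) [AddCommGroup V] [Module ℚ V]
    [FiniteDimensional ℚ V]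
    (s : V →ₗ[ℚ] V)
    (hstar : (s - 1) ^ 2 ≠ 0)
    (G1 G2 : Submodule ℚ V)
    (h1 : LinearMap.range (s - 1) ≤ G1)
    (h2 : Submodule.map (s - 1) G1 ≤ G2)
    (h3 : Submodule.map (s - 1) G2 = ⊥)
    (h4 : Module.finrank ℚ (V ⧸ G1) = 1)
    (h5 : Module.finrank ℚ G2 = 1) :
    G1 = LinearMap.ker ((s - 1) ^ 2) ∧ G2 = LinearMap.range ((s - 1) ^ 2) := by
  have hker : LinearMap.ker ((s - 1) ^ 2) ≠ ⊤ := by rwa [Ne, LinearMap.ker_eq_top]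
  have hrange : LinearMap.range ((s - 1) ^ 2) ≠ ⊥ := by rwa [Ne, LinearMap.range_eq_bot]
  exact ⟨Submodule.eq_of_le_of_finrank_quotient_eq_one
      (Module.End.le_ker_sq_of_map_le h2 h3) hker h4,
    (Submodule.eq_of_le_of_finrank_eq_one (Module.End.range_sq_le_of_map_le h1 h2) hrange h5).symm⟩

/-- uniqueness of the codimension filtration on a Serre lattice over ℚ of
surface* type. -/
theorem codimension_filtration_unique (V : Type*) [AddCommGroup V] [Module ℚ V]
    [FiniteDimensional ℚ V]
    (B : V →ₗ[ℚ] V →ₗ[ℚ] ℚ) (hB : ∀ v, (∀ w, B v w = 0) → v = 0)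
    (s : V →ₗ[ℚ] V) (hbij : Function.Bijective s)
    (hserre : ∀ v w, B v (s w) = B w v)
    (huni : (s - 1) ^ Module.finrank ℚ V = 0)
    (hrank : Module.finrank ℚ (LinearMap.range (s - 1)) ≤ 2)
    (hstar : (s - 1) ^ 2 ≠ 0)
    (G1 G2 : Submodule ℚ V) (hG : G2 ≤ G1)
    (h1 : LinearMap.range (s - 1) ≤ G1)
    (h2 : Submodule.map (s - 1) G1 ≤ G2)
    (h3 : Submodule.map (s - 1) G2 = ⊥)
    (h4 : Module.finrank ℚ (V ⧸ G1) = 1)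
    (h5 : Module.finrank ℚ G2 = 1) :
    G1 = LinearMap.ker ((s - 1) ^ 2) ∧ G2 = LinearMap.range ((s - 1) ^ 2) :=
  codimension_filtration_unique_general V s hstar G1 G2 h1 h2 h3 h4 h5
end

section
/- Let (V, ⟨−,−⟩, s) be a Serre lattice over ℚ of surface* type and set F¹V := ker((s−1)²), F²V := im((s−1)²). Then: (i) ⟨v, w⟩ = ⟨w, v⟩ for all v, w ∈ F¹V; (ii) ⟨v, z⟩ = 0 and ⟨z, v⟩ = 0 for all v ∈ F¹V and z ∈ F²V; (iii) {x ∈ V : ⟨v, x⟩ = 0 for all v ∈ F¹V} = F²V; consequently the symmetric bilinear form induced by ⟨−,−⟩ on the quotient F¹V/F²V is nondegenerate. -/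
/-- for a Serre lattice over ℚ of surface* type with `F¹V := ker((s−1)²)` and
`F²V := im((s−1)²)`: (i) `⟨−,−⟩` is symmetric on `F¹V`; (ii) `F²V` pairs to zero with `F¹V`
on both sides; (iii) the right `⟨−,−⟩`-orthogonal of `F¹V` is exactly `F²V`; consequently the
induced symmetric form on `F¹V/F²V` is nondegenerate. -/
theorem intersection_form_nondegenerate (V : Type*) [AddCommGroup V] [Module ℚ V]
    [FiniteDimensional ℚ V]
    (B : V →ₗ[ℚ] V →ₗ[ℚ] ℚ) (hB : ∀ v, (∀ w, B v w = 0) → v = 0)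
    (s : V →ₗ[ℚ] V) (hbij : Function.Bijective s)
    (hserre : ∀ v w, B v (s w) = B w v)
    (huni : (s - 1) ^ Module.finrank ℚ V = 0)
    (hrank : Module.finrank ℚ (LinearMap.range (s - 1)) ≤ 2)
    (hstar : (s - 1) ^ 2 ≠ 0) :
    (∀ v ∈ LinearMap.ker ((s - 1) ^ 2), ∀ w ∈ LinearMap.ker ((s - 1) ^ 2), B v w = B w v) ∧
      (∀ v ∈ LinearMap.ker ((s - 1) ^ 2), ∀ z ∈ LinearMap.range ((s - 1) ^ 2),
        B v z = 0 ∧ B z v = 0) ∧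
      {x : V | ∀ v ∈ LinearMap.ker ((s - 1) ^ 2), B v x = 0} =
        (LinearMap.range ((s - 1) ^ 2) : Set V) ∧
      (∀ v ∈ LinearMap.ker ((s - 1) ^ 2),
        (∀ w ∈ LinearMap.ker ((s - 1) ^ 2), B v w = 0) → v ∈ LinearMap.range ((s - 1) ^ 2)) := by
  set N : V →ₗ[ℚ] V := s - 1 with hNdef
  have hsapp : ∀ x : V, s x = x + N x := by
    intro x; simp [hNdef]
  have hN2app : ∀ x : V, (N ^ 2) x = N (N x) := by
    intro x; rw [pow_two]; rfl
  have hmemK : ∀ x : V, x ∈ LinearMap.ker (N ^ 2) ↔ N (N x) = 0 := by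
    intro x; rw [LinearMap.mem_ker, hN2app]
  -- s is an isometry
  have iso : ∀ v w : V, B (s v) (s w) = B v w := by
    intro v w; rw [hserre (s v) w, hserre w v]
  -- elements of ker N pair to zero with range N on the left
  have lem2 : ∀ a : V, N a = 0 → ∀ u : V, B a (N u) = 0 := by
    intro a ha u
    have hsa : s a = a := by rw [hsapp, ha, add_zero]
    have h1 : B a (s u) = B a u := by conv_lhs => rw [← hsa, iso]
    have h2 : B a (s u) = B a u + B a (N u) := by rw [hsapp u, map_add]
    linarith
  -- for v ∈ ker N², B v (N w) = - B (N v) w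
  have lem3 : ∀ v : V, N (N v) = 0 → ∀ w : V, B v (N w) = - B (N v) w := by
    intro v hv w
    have h1 : B (s v) (s w) = B v w := iso v w
    have h2 : B (s v) (s w) = B v w + B v (N w) + (B (N v) w + B (N v) (N w)) := by
      rw [hsapp v, hsapp w]
      simp only [map_add, LinearMap.add_apply]
      ring
    have h3 : B (N v) (N w) = 0 := lem2 (N v) hv w
    linarith
  -- B v (N v) = 0 for v ∈ ker N²
  have lemself : ∀ v : V, N (N v) = 0 → B v (N v) = 0 := by
    intro v hv
    have h1 : B v (N v) = - B (N v) v := lem3 v hv v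
    have h2 : B (N v) v = B v (s (N v)) := (hserre v (N v)).symm
    have h3 : s (N v) = N v := by rw [hsapp, hv, add_zero]
    rw [h3] at h2
    linarith
  -- (ii) left
  have ii_left : ∀ v : V, N (N v) = 0 → ∀ u : V, B v (N (N u)) = 0 := by
    intro v hv u
    rw [lem3 v hv (N u), lem2 (N v) hv u, neg_zero]
  -- (ii) right
  have ii_right : ∀ v : V, N (N v) = 0 → ∀ u : V, B (N (N u)) v = 0 := by
    intro v hv u
    have h1 : B (N (N u)) v = B v (s (N (N u))) := (hserre v (N (N u))).symm
    rw [hsapp (N (N u)), map_add] at h1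
    rw [h1, ii_left v hv u, ii_left v hv (N u), add_zero]
  -- dimension bookkeeping
  set K := LinearMap.ker (N ^ 2) with hK
  set R2 := LinearMap.range (N ^ 2) with hR2
  have rn2 : Module.finrank ℚ R2 + Module.finrank ℚ K = Module.finrank ℚ V :=
    LinearMap.finrank_range_add_finrank_ker (N ^ 2)
  have rn1 : Module.finrank ℚ (LinearMap.range N) + Module.finrank ℚ (LinearMap.ker N)
      = Module.finrank ℚ V := LinearMap.finrank_range_add_finrank_ker N
  have r2pos : 0 < Module.finrank ℚ R2 := by
    rcases Nat.eq_zero_or_pos (Module.finrank ℚ R2) with h | h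
    · exact absurd (LinearMap.range_eq_bot.mp (Submodule.finrank_eq_zero.mp h)) hstar
    · exact h
  have hkerle : LinearMap.ker N ≤ K := by
    intro x hx
    rw [hK, hmemK]
    rw [LinearMap.mem_ker] at hx
    rw [hx, map_zero]
  have hMle : Module.finrank ℚ (Submodule.map N K) ≤ 1 := by
    have hg := LinearMap.finrank_range_add_finrank_ker (N.comp K.subtype)
    rw [LinearMap.range_comp, Submodule.range_subtype, LinearMap.ker_comp] at hg
    have he : Module.finrank ℚ (Submodule.comap K.subtype (LinearMap.ker N))
        = Module.finrank ℚ (LinearMap.ker N) :=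
      LinearEquiv.finrank_eq (Submodule.comapSubtypeEquivOfLe hkerle)
    have hrange2 : Module.finrank ℚ (LinearMap.range N) ≤ 2 := hrank
    omega
  -- key: for v, w ∈ K, B v (N w) = 0
  have key : ∀ v ∈ K, ∀ w ∈ K, B v (N w) = 0 := by
    intro v hv w hw
    have hv' : N (N v) = 0 := (hmemK v).mp hv
    by_cases hNv : N v = 0
    · rw [lem3 v hv' w, hNv, map_zero, LinearMap.zero_apply, neg_zero]
    · have hsp : Submodule.span ℚ {N v} = Submodule.map N K := by
        apply Submodule.eq_of_le_of_finrank_le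
        · rw [Submodule.span_le, Set.singleton_subset_iff]
          exact Submodule.mem_map_of_mem hv
        · rw [finrank_span_singleton hNv]; exact hMle
      have hNw : N w ∈ Submodule.span ℚ {N v} := by
        rw [hsp]; exact Submodule.mem_map_of_mem hw
      obtain ⟨c, hc⟩ := Submodule.mem_span_singleton.mp hNw
      rw [← hc, map_smul, smul_eq_mul, lemself v hv', mul_zero]
  -- (i)
  have part_i : ∀ v ∈ K, ∀ w ∈ K, B v w = B w v := by
    intro v hv w hw
    have h1 : B v (s w) = B w v := hserre v w
    rw [hsapp w, map_add, key v hv w hw, add_zero] at h1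
    exact h1
  -- (ii)
  have part_ii : ∀ v ∈ K, ∀ z ∈ R2, B v z = 0 ∧ B z v = 0 := by
    intro v hv z hz
    have hv' : N (N v) = 0 := (hmemK v).mp hv
    obtain ⟨u, hu⟩ := hz
    rw [hN2app] at hu
    subst hu
    exact ⟨ii_left v hv' u, ii_right v hv' u⟩
  -- (iii)
  have part_iii : {x : V | ∀ v ∈ K, B v x = 0} = (R2 : Set V) := by
    have hBinj : Function.Injective B := by
      intro x y hxy
      have hs : x - y = 0 := by
        apply hB
        intro w
        rw [map_sub, LinearMap.sub_apply, hxy, sub_self]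
      exact sub_eq_zero.mp hs
    have hdual : Module.finrank ℚ V = Module.finrank ℚ (Module.Dual ℚ V) :=
      Subspace.dual_finrank_eq.symm
    let eB : V ≃ₗ[ℚ] Module.Dual ℚ V := LinearMap.linearEquivOfInjective B hBinj hdual
    have heB : ∀ x, eB x = B x := fun x => rfl
    have hFinj : Function.Injective B.flip := by
      rw [← LinearMap.ker_eq_bot]
      rw [Submodule.eq_bot_iff]
      intro x hx
      rw [LinearMap.mem_ker] at hx
      rw [← Module.forall_dual_apply_eq_zero_iff ℚ x]
      intro φ
      obtain ⟨v, hv⟩ := eB.surjective φ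
      have hx' : B v x = 0 := by
        have := congrArg (fun f : Module.Dual ℚ V => f v) hx
        simpa [LinearMap.flip_apply] using this
      rw [← hv, heB]
      exact hx'
    let eF : V ≃ₗ[ℚ] Module.Dual ℚ V := LinearMap.linearEquivOfInjective B.flip hFinj hdual
    have heF : ∀ x, eF x = B.flip x := fun x => rfl
    -- the orthogonal as a submodule
    have hT : ∀ x : V, (∀ v ∈ K, B v x = 0) ↔
        x ∈ Submodule.comap (eF : V →ₗ[ℚ] Module.Dual ℚ V) K.dualAnnihilator := by
      intro x
      rw [Submodule.mem_comap]
      constructor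
      · intro h
        rw [Submodule.mem_dualAnnihilator]
        intro v hv
        have : (eF x : Module.Dual ℚ V) v = B v x := by rw [heF]; rfl
        rw [LinearEquiv.coe_coe, this]
        exact h v hv
      · intro h v hv
        rw [Submodule.mem_dualAnnihilator] at h
        have h2 := h v hv
        rw [LinearEquiv.coe_coe] at h2
        have : (eF x : Module.Dual ℚ V) v = B v x := by rw [heF]; rfl
        rw [this] at h2
        exact h2
    have hfrT : Module.finrank ℚ
        (Submodule.comap (eF : V →ₗ[ℚ] Module.Dual ℚ V) K.dualAnnihilator)
        = Module.finrank ℚ K.dualAnnihilator := by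
      rw [Submodule.comap_equiv_eq_map_symm]
      exact LinearEquiv.finrank_map_eq eF.symm _
    have hfrAnn : Module.finrank ℚ K + Module.finrank ℚ K.dualAnnihilator
        = Module.finrank ℚ V := by
      have h1 : Module.finrank ℚ (V ⧸ K) = Module.finrank ℚ K.dualAnnihilator :=
        LinearEquiv.finrank_eq (Subspace.quotEquivAnnihilator K)
      have h2 := Submodule.finrank_quotient_add_finrank K
      omega
    have hle : R2 ≤ Submodule.comap (eF : V →ₗ[ℚ] Module.Dual ℚ V) K.dualAnnihilator := by
      intro z hz
      rw [← hT z]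
      intro v hv
      exact (part_ii v hv z hz).1
    have heq : R2 = Submodule.comap (eF : V →ₗ[ℚ] Module.Dual ℚ V) K.dualAnnihilator := by
      apply Submodule.eq_of_le_of_finrank_le hle
      rw [hfrT]
      omega
    ext x
    rw [Set.mem_setOf_eq, hT x, SetLike.mem_coe, heq]
  refine ⟨part_i, part_ii, part_iii, ?_⟩
  -- (iv)
  intro v hv hvw
  have : v ∈ {x : V | ∀ u ∈ K, B u x = 0} := by
    intro u hu
    rw [part_i u hu v hv]  -- B u v = B v u
    exact hvw u hu
  rw [part_iii] at this
  exact this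
end

section
/- Let (V, ⟨−,−⟩, s) be a Serre lattice over ℚ of surface* type and let o, o′ ∈ V satisfy o′ = ε·o + γ with ε ∈ {1, −1} and γ ∈ F¹V := ker((s−1)²). Then (s − 1)o′ − ε·(s − 1)o ∈ F²V := im((s−1)²); in other words, the canonical class — the image of (s − 1)o in F¹V/F²V — is independent of the choice of structure element up to sign. -/
private lemma pow_eq_zero_of_range_pow_succ_eq {V : Type*} [AddCommGroup V] [Module ℚ V]
    (f : V →ₗ[ℚ] V) (K n : ℕ) (hK : f ^ K = 0)
    (h : LinearMap.range (f ^ (n + 1)) = LinearMap.range (f ^ n)) : f ^ n = 0 := by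
  have hstep : ∀ j, LinearMap.range (f ^ (n + j)) = LinearMap.range (f ^ n) := by
    intro j
    induction j with
    | zero => rfl
    | succ j ih =>
      have h1 : f ^ (n + (j + 1)) = f * f ^ (n + j) := by
        rw [← pow_succ']; ring_nf
      have h2 : f ^ (n + 1) = f * f ^ n := by rw [← pow_succ']
      rw [h1, Module.End.mul_eq_comp, LinearMap.range_comp, ih,
        ← LinearMap.range_comp, ← Module.End.mul_eq_comp, ← h2, h]
  have hzero : f ^ (n + K) = 0 := by
    rw [pow_add, hK, mul_zero]
  have := hstep K
  rw [hzero, LinearMap.range_zero] at this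
  exact LinearMap.range_eq_bot.mp this.symm

/-- the canonical class of a Serre lattice over ℚ of surface* type is
independent of the choice of structure element, up to sign: if `o′ = ε·o + γ` with
`ε = ±1` and `γ ∈ F¹V := ker((s−1)²)`, then `(s−1)o′ − ε·(s−1)o ∈ F²V := im((s−1)²)`. -/
theorem canonical_class_well_defined (V : Type*) [AddCommGroup V] [Module ℚ V]
    [FiniteDimensional ℚ V]
    (B : V →ₗ[ℚ] V →ₗ[ℚ] ℚ) (hB : ∀ v, (∀ w, B v w = 0) → v = 0)
    (s : V →ₗ[ℚ] V) (hbij : Function.Bijective s)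
    (hserre : ∀ v w, B v (s w) = B w v)
    (huni : (s - 1) ^ Module.finrank ℚ V = 0)
    (hrank : Module.finrank ℚ (LinearMap.range (s - 1)) ≤ 2)
    (hstar : (s - 1) ^ 2 ≠ 0)
    (o o' γ : V) (ε : ℚ) (hε : ε = 1 ∨ ε = -1)
    (hγ : γ ∈ LinearMap.ker ((s - 1) ^ 2))
    (ho' : o' = ε • o + γ) :
    (s - 1) o' - ε • ((s - 1) o) ∈ LinearMap.range ((s - 1) ^ 2) := by
  subst ho'
  set N : V →ₗ[ℚ] V := s - 1 with hNdef
  have hred : N (ε • o + γ) - ε • (N o) = N γ := by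
    rw [map_add, map_smul]; abel
  rw [hred]
  -- strict decreasing chain of ranges
  have hle : ∀ m : ℕ, LinearMap.range (N ^ (m + 1)) ≤ LinearMap.range (N ^ m) := by
    intro m
    rw [pow_succ, Module.End.mul_eq_comp]
    exact LinearMap.range_comp_le_range _ _
  have hlt1 : LinearMap.range (N ^ 2) < LinearMap.range (N ^ 1) := by
    refine lt_of_le_of_ne (hle 1) fun h => ?_
    have := pow_eq_zero_of_range_pow_succ_eq N (Module.finrank ℚ V) 1 huni h
    exact hstar (by rw [pow_one] at this; rw [pow_two, this, zero_mul])
  have hlt2 : LinearMap.range (N ^ 3) < LinearMap.range (N ^ 2) := by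
    refine lt_of_le_of_ne (hle 2) fun h => ?_
    exact hstar (pow_eq_zero_of_range_pow_succ_eq N (Module.finrank ℚ V) 2 huni h)
  have hr1 : Module.finrank ℚ (LinearMap.range (N ^ 1)) ≤ 2 := by
    rw [pow_one]; exact hrank
  have hd1 : Module.finrank ℚ (LinearMap.range (N ^ 2)) <
      Module.finrank ℚ (LinearMap.range (N ^ 1)) :=
    Submodule.finrank_lt_finrank_of_lt hlt1
  have hd2 : Module.finrank ℚ (LinearMap.range (N ^ 3)) <
      Module.finrank ℚ (LinearMap.range (N ^ 2)) :=
    Submodule.finrank_lt_finrank_of_lt hlt2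
  have hr3 : Module.finrank ℚ (LinearMap.range (N ^ 3)) = 0 := by omega
  have hN3 : N ^ 3 = 0 := by
    rw [← LinearMap.range_eq_bot, ← Submodule.finrank_eq_zero]
    exact hr3
  -- N γ lands in range N ⊓ ker N
  have hmem : N γ ∈ LinearMap.range (N ^ 1) ⊓ LinearMap.ker N := by
    constructor
    · rw [pow_one]; exact ⟨γ, rfl⟩
    · have : (N ^ 2) γ = 0 := hγ
      simpa [pow_two] using this
  -- rank-nullity for N restricted to range N
  have hrn : Module.finrank ℚ (LinearMap.range (N ^ 2)) +
      Module.finrank ℚ (LinearMap.range (N ^ 1) ⊓ LinearMap.ker N : Submodule ℚ V) =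
      Module.finrank ℚ (LinearMap.range (N ^ 1)) := by
    have key := LinearMap.finrank_range_add_finrank_ker
      (N ∘ₗ (LinearMap.range (N ^ 1)).subtype)
    have hrg : LinearMap.range (N ∘ₗ (LinearMap.range (N ^ 1)).subtype) =
        LinearMap.range (N ^ 2) := by
      rw [LinearMap.range_comp, Submodule.range_subtype, pow_one, pow_two,
        Module.End.mul_eq_comp, LinearMap.range_comp]
    have hkr : Module.finrank ℚ
        (LinearMap.ker (N ∘ₗ (LinearMap.range (N ^ 1)).subtype)) =
        Module.finrank ℚ (LinearMap.range (N ^ 1) ⊓ LinearMap.ker N : Submodule ℚ V) := by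
      rw [LinearMap.ker_comp,
        ← Submodule.finrank_map_subtype_eq (LinearMap.range (N ^ 1)),
        Submodule.map_comap_subtype]
    rw [hrg, hkr] at key
    exact key
  -- range N² = range N ⊓ ker N
  have heq : LinearMap.range (N ^ 2) =
      (LinearMap.range (N ^ 1) ⊓ LinearMap.ker N : Submodule ℚ V) := by
    apply Submodule.eq_of_le_of_finrank_le
    · refine le_inf (hle 1) ?_
      rintro v ⟨w, rfl⟩
      have : (N ^ 3) w = 0 := by rw [hN3]; rfl
      show N ((N ^ 2) w) = 0
      rw [← Module.End.mul_apply, ← pow_succ']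
      exact this
    · omega
  rw [heq]
  exact hmem
end

section
/- Let (V, ⟨−,−⟩, s) be a Serre lattice over ℚ of surface* type and let o ∈ V be a structure element, i.e. V = ℚ·o ⊕ F¹V where F¹V := ker((s−1)²). Then ⟨(s − 1)o, (s − 1)o⟩ ≠ 0; equivalently, the degree δ := −⟨(s − 1)o, (s − 1)o⟩ (the self-intersection of the canonical class) is nonzero. -/
/-- for a Serre lattice over ℚ of surface* type with structure element `o`
(i.e. `V = ℚ·o ⊕ F¹V` where `F¹V := ker((s−1)²)`), the degree
`δ = −⟨(s−1)o, (s−1)o⟩` is nonzero. -/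
theorem degree_nonzero (V : Type*) [AddCommGroup V] [Module ℚ V]
    [FiniteDimensional ℚ V]
    (B : V →ₗ[ℚ] V →ₗ[ℚ] ℚ) (hB : ∀ v, (∀ w, B v w = 0) → v = 0)
    (s : V →ₗ[ℚ] V) (hbij : Function.Bijective s)
    (hserre : ∀ v w, B v (s w) = B w v)
    (huni : (s - 1) ^ Module.finrank ℚ V = 0)
    (hrank : Module.finrank ℚ (LinearMap.range (s - 1)) ≤ 2)
    (hstar : (s - 1) ^ 2 ≠ 0)
    (o : V) (ho : IsCompl (Submodule.span ℚ {o}) (LinearMap.ker ((s - 1) ^ 2))) :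
    B ((s - 1) o) ((s - 1) o) ≠ 0 := by
  intro h0
  -- decomposition of any vector
  have hdecomp : ∀ x : V, ∃ a : ℚ, ∃ k : V, ((s - 1) ^ 2 : V →ₗ[ℚ] V) k = 0 ∧ x = a • o + k := by
    intro x
    have hx : x ∈ Submodule.span ℚ {o} ⊔ LinearMap.ker ((s - 1) ^ 2) := by
      rw [ho.sup_eq_top]; trivial
    obtain ⟨y, hy, z, hz, hyz⟩ := Submodule.mem_sup.mp hx
    obtain ⟨a, rfl⟩ := Submodule.mem_span_singleton.mp hy
    exact ⟨a, z, LinearMap.mem_ker.mp hz, hyz.symm⟩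
  have hsq : ∀ x : V, ((s - 1) ^ 2 : V →ₗ[ℚ] V) x = (s - 1) ((s - 1) x) := by
    intro x; rw [pow_two]; rfl
  -- finrank ≥ 3
  have hn3 : 3 ≤ Module.finrank ℚ V := by
    by_contra h
    push_neg at h
    apply hstar
    have e : (s - 1) ^ 2 = (s - 1) ^ Module.finrank ℚ V * (s - 1) ^ (2 - Module.finrank ℚ V) := by
      rw [← pow_add]; congr 1; omega
    rw [e, huni, zero_mul]
  -- N² o ≠ 0
  have hN2o : ((s - 1) ^ 2 : V →ₗ[ℚ] V) o ≠ 0 := by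
    have hex : ∃ x, ((s - 1) ^ 2 : V →ₗ[ℚ] V) x ≠ 0 := by
      by_contra h
      push_neg at h
      exact hstar (LinearMap.ext fun x => by simpa using h x)
    obtain ⟨x, hx⟩ := hex
    obtain ⟨a, k, hk, rfl⟩ := hdecomp x
    intro h2o
    apply hx
    rw [map_add, map_smul, h2o, hk, smul_zero, add_zero]
  -- write (s-1) o = c • o + k0
  obtain ⟨c, k0, hk0, hNo⟩ := hdecomp ((s - 1) o)
  -- powers
  have hpow : ∀ m : ℕ, ((s - 1) ^ (m + 2) : V →ₗ[ℚ] V) o = c ^ m • ((s - 1) ^ 2 : V →ₗ[ℚ] V) o := by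
    intro m
    induction m with
    | zero => simp
    | succ m ih =>
      have e1 : (m + 1 + 2) = (m + 2) + 1 := by omega
      rw [e1, pow_succ, Module.End.mul_apply, hNo, map_add, map_smul, ih]
      have e2 : ((s - 1) ^ (m + 2) : V →ₗ[ℚ] V) k0 = 0 := by
        have e3 : (s - 1) ^ (m + 2) = (s - 1) ^ m * (s - 1) ^ 2 := by rw [← pow_add]
        rw [e3, Module.End.mul_apply, hk0, map_zero]
      rw [e2, add_zero, smul_smul, ← pow_succ']
  -- c = 0
  have hc : c = 0 := by
    have hcn := hpow (Module.finrank ℚ V - 2)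
    have e : (s - 1) ^ (Module.finrank ℚ V - 2 + 2) = 0 := by
      rw [show Module.finrank ℚ V - 2 + 2 = Module.finrank ℚ V from by omega]
      exact huni
    rw [e, LinearMap.zero_apply] at hcn
    rcases smul_eq_zero.mp hcn.symm with h | h
    · exact pow_eq_zero_iff (show Module.finrank ℚ V - 2 ≠ 0 from by omega) |>.mp h
    · exact absurd h hN2o
  -- N³ o = 0, i.e. (s-1) applied to N² o
  have h3 : (s - 1) ((s - 1) ((s - 1) o)) = 0 := by
    have h := hpow 1
    rw [hc, pow_one, zero_smul] at h
    have e : ((s - 1) ^ 3 : V →ₗ[ℚ] V) o = (s - 1) ((s - 1) ((s - 1) o)) := by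
      rw [show (3 : ℕ) = 2 + 1 from rfl, pow_succ']
      rw [Module.End.mul_apply, hsq]
    rw [← e, h]
  -- bilinear identities
  have star : ∀ v w : V, B v ((s - 1) w) + B v w = B w v := by
    intro v w
    have h := hserre v w
    have e : s w = (s - 1) w + w := by simp [LinearMap.sub_apply]
    rw [e, map_add] at h
    linarith
  have dia : ∀ v w : V, B ((s - 1) v) w + B v ((s - 1) w) + B ((s - 1) v) ((s - 1) w) = 0 := by
    intro v w
    have key : B (s v) (s w) = B v w := by rw [hserre (s v) w, hserre w v]
    have ev : s v = (s - 1) v + v := by simp [LinearMap.sub_apply]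
    have ew : s w = (s - 1) w + w := by simp [LinearMap.sub_apply]
    rw [ev, ew] at key
    simp only [map_add, LinearMap.add_apply] at key
    linarith
  -- B (N² o) · = 0
  apply hN2o
  apply hB
  intro w
  obtain ⟨d, k, hk, rfl⟩ := hdecomp w
  rw [hsq, map_add, map_smul]
  have hk' : (s - 1) ((s - 1) k) = 0 := by rw [← hsq]; exact hk
  -- B (N²o) o = 0
  have f1 := dia ((s - 1) o) o
  have f2 := dia ((s - 1) ((s - 1) o)) o
  rw [h3] at f2
  simp only [map_zero, LinearMap.zero_apply] at f2
  -- k side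
  have g1 := dia k ((s - 1) o)
  have g2 := dia ((s - 1) k) o
  have g3 := dia ((s - 1) k) ((s - 1) o)
  rw [hk'] at g2 g3
  simp only [map_zero, LinearMap.zero_apply] at g2 g3
  have sym := star k ((s - 1) ((s - 1) o))
  rw [h3] at sym
  simp only [map_zero] at sym
  have hBo : B ((s - 1) ((s - 1) o)) o = 0 := by linarith
  have hBk : B ((s - 1) ((s - 1) o)) k = 0 := by linarith
  rw [hBo, hBk, smul_zero, add_zero]
end

section
/- Let (V, ⟨−,−⟩, s) be a Serre lattice over ℚ of surface* type with structure element o. Let (v, w) be an exceptional pair (⟨v,v⟩ = ⟨w,w⟩ = 1 and ⟨w,v⟩ = 0) with r(v) > 0 and r(w) > 0, set h := ⟨v, w⟩ and u := (1/r(w))·w − (1/r(v))·v. If ⟨u, u⟩ > 0 and ⟨u, (s−1)o⟩ > 0, then |r(w) − h·r(v)| < r(w) or |r(v) − h·r(w)| < r(v); in other words, the left mutation σ(v,w) = (w − h·v, v) or the right mutation σ⁻¹(v,w) = (w, v − h·w) strictly decreases the quantity |r(v)| + |r(w)|. -/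
/-!
Write `N = s - 1`. The Serre condition makes `B x (N y) = B y x - B x y` alternating. Since
`N² ≠ 0` and `rank N ≤ 2`, the space `range N ⊓ ker N` has dimension at most one, and `N` maps
`ker N²` into it, so the alternating form vanishes on `ker N²`. Expanding `v` and `w` along `o` then gives
`⟨v, w⟩ = ⟨v, w⟩ - ⟨w, v⟩ = r(v) r(w) ⟨u, N o⟩ > 0`, while `⟨u, u⟩ > 0` reads
`h r(v) r(w) < r(v)² + r(w)²`. If both mutations failed, then `h r(v) ≥ 2 r(w)` and
`h r(w) ≥ 2 r(v)`, whence `h r(v) r(w) ≥ r(v)² + r(w)²`.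
-/

open Module LinearMap

theorem Submodule.finrank_map_add_finrank_inf_ker {K V V₂ : Type*} [Field K] [AddCommGroup V]
    [Module K V] [AddCommGroup V₂] [Module K V₂] [FiniteDimensional K V]
    (f : V →ₗ[K] V₂) (W : Submodule K V) :
    finrank K (W.map f) + finrank K ↥(W ⊓ ker f) = finrank K W := by
  have hker : finrank K (ker (f.domRestrict W)) = finrank K ↥(W ⊓ ker f) := by
    rw [ker_domRestrict, ← Submodule.finrank_map_subtype_eq, Submodule.map_comap_subtype]
  rw [← range_domRestrict, ← hker, finrank_range_add_finrank_ker]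

theorem LinearMap.finrank_range_inf_ker_le_one {K V : Type*} [Field K] [AddCommGroup V]
    [Module K V] [FiniteDimensional K V] {N : V →ₗ[K] V}
    (hrank : finrank K (range N) ≤ 2) (hN : N ^ 2 ≠ 0) :
    finrank K ↥(range N ⊓ ker N) ≤ 1 := by
  have hsq : (range N).map N = range (N ^ 2) := by
    rw [pow_two, Module.End.mul_eq_comp, range_comp]
  have hpos : 1 ≤ finrank K (range (N ^ 2)) :=
    Submodule.one_le_finrank_iff.mpr (by simpa [range_eq_bot] using hN)
  have := Submodule.finrank_map_add_finrank_inf_ker N (range N)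
  rw [hsq] at this
  omega

theorem abs_sub_mul_lt_or_abs_sub_mul_lt {K : Type*} [Field K] [LinearOrder K]
    [IsStrictOrderedRing K] {a b h : K} (ha : 0 < a) (hb : 0 < b) (hh : 0 < h)
    (hab : h * a * b < a ^ 2 + b ^ 2) :
    |b - h * a| < b ∨ |a - h * b| < a := by
  have hone : h * a < 2 * b ∨ h * b < 2 * a := by
    by_contra! ⟨h₁, h₂⟩
    nlinarith [mul_le_mul_of_nonneg_right h₁ hb.le, mul_le_mul_of_nonneg_right h₂ ha.le]
  rcases hone with hlt | hlt
  · left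
    rw [abs_sub_lt_iff]
    constructor <;> nlinarith [mul_pos hh ha]
  · right
    rw [abs_sub_lt_iff]
    constructor <;> nlinarith [mul_pos hh hb]

namespace SerreLattice

section CommRing

variable {R V : Type*} [CommRing R] [AddCommGroup V] [Module R V]
  {B : V →ₗ[R] V →ₗ[R] R} {s : V →ₗ[R] V}

theorem apply_sub_one (hserre : ∀ v w, B v (s w) = B w v) (x y : V) :
    B x ((s - 1) y) = B y x - B x y := by
  rw [LinearMap.sub_apply, Module.End.one_apply, map_sub, hserre]

theorem apply_sub_one_self (hserre : ∀ v w, B v (s w) = B w v) (x : V) :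
    B x ((s - 1) x) = 0 := by
  rw [apply_sub_one hserre, sub_self]

theorem apply_sub_one_comm (hserre : ∀ v w, B v (s w) = B w v) (x y : V) :
    B x ((s - 1) y) = -B y ((s - 1) x) := by
  rw [apply_sub_one hserre, apply_sub_one hserre, neg_sub]

end CommRing

variable {K V : Type*} [Field K] [AddCommGroup V] [Module K V]
  {B : V →ₗ[K] V →ₗ[K] K} {s : V →ₗ[K] V}

theorem apply_sub_one_eq_zero_of_mem_ker_sq [FiniteDimensional K V]
    (hserre : ∀ v w, B v (s w) = B w v) (hrank : finrank K (range (s - 1)) ≤ 2)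
    (hstar : (s - 1) ^ 2 ≠ 0) {x y : V} (hx : x ∈ ker ((s - 1) ^ 2))
    (hy : y ∈ ker ((s - 1) ^ 2)) :
    B x ((s - 1) y) = 0 := by
  set N := s - 1
  have hmem : ∀ z ∈ ker (N ^ 2), N z ∈ range N ⊓ ker N := fun z hz =>
    ⟨⟨z, rfl⟩, by simpa [pow_two] using hz⟩
  obtain ⟨e, he⟩ := finrank_le_one_iff.mp (finrank_range_inf_ker_le_one hrank hstar)
  obtain ⟨a, ha⟩ := he ⟨N x, hmem x hx⟩
  obtain ⟨b, hb⟩ := he ⟨N y, hmem y hy⟩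
  replace ha : a • (e : V) = N x := congrArg Subtype.val ha
  replace hb : b • (e : V) = N y := congrArg Subtype.val hb
  rcases eq_or_ne a 0 with rfl | ha₀
  · rw [apply_sub_one_comm hserre, ← ha, zero_smul, map_zero, neg_zero]
  · have hNy : N y = (b * a⁻¹) • N x := by
      rw [← ha, ← hb, smul_smul, inv_mul_cancel_right₀ ha₀]
    rw [hNy, map_smul, apply_sub_one_self hserre, smul_zero]

theorem mul_mul_apply_sub_one_eq (hserre : ∀ v w, B v (s w) = B w v) {a b : K}
    (ha : a ≠ 0) (hb : b ≠ 0) {o x y x₁ y₁ : V} (hx : x = a • o + x₁) (hy : y = b • o + y₁)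
    (h₁ : B x₁ ((s - 1) y₁) = 0) :
    a * b * B (b⁻¹ • y - a⁻¹ • x) ((s - 1) o) = B x y - B y x := by
  rw [apply_sub_one hserre] at h₁ ⊢
  subst hx hy
  simp only [map_add, map_sub, map_smul, LinearMap.add_apply, LinearMap.sub_apply,
    LinearMap.smul_apply, smul_eq_mul] at h₁ ⊢
  field_simp
  linear_combination h₁

theorem apply_mul_mul_lt_sq_add_sq [LinearOrder K] [IsStrictOrderedRing K] {a b : K}
    (ha : a ≠ 0) (hb : b ≠ 0) {x y : V} (hxx : B x x = 1) (hyy : B y y = 1) (hyx : B y x = 0)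
    (hpos : 0 < B (b⁻¹ • y - a⁻¹ • x) (b⁻¹ • y - a⁻¹ • x)) :
    B x y * a * b < a ^ 2 + b ^ 2 := by
  have hexpand : B (b⁻¹ • y - a⁻¹ • x) (b⁻¹ • y - a⁻¹ • x) * (a ^ 2 * b ^ 2) =
      a ^ 2 + b ^ 2 - B x y * a * b := by
    simp only [map_sub, map_smul, LinearMap.sub_apply, LinearMap.smul_apply, smul_eq_mul,
      hxx, hyy, hyx]
    field_simp
    ring
  have : 0 < B (b⁻¹ • y - a⁻¹ • x) (b⁻¹ • y - a⁻¹ • x) * (a ^ 2 * b ^ 2) := by positivity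
  linarith

end SerreLattice

theorem rank_reduction_general (V : Type*) [AddCommGroup V] [Module ℚ V]
    [FiniteDimensional ℚ V]
    (B : V →ₗ[ℚ] V →ₗ[ℚ] ℚ)
    (s : V →ₗ[ℚ] V)
    (hserre : ∀ v w, B v (s w) = B w v)
    (hrank : Module.finrank ℚ (LinearMap.range (s - 1)) ≤ 2)
    (hstar : (s - 1) ^ 2 ≠ 0)
    (o : V)
    (v w v₁ w₁ : V) (rv rw : ℚ)
    (hv₁ : v₁ ∈ LinearMap.ker ((s - 1) ^ 2)) (hw₁ : w₁ ∈ LinearMap.ker ((s - 1) ^ 2))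
    (hv : v = rv • o + v₁) (hw : w = rw • o + w₁)
    (hrv : 0 < rv) (hrw : 0 < rw)
    (hvv : B v v = 1) (hww : B w w = 1) (hwv : B w v = 0)
    (u : V) (hu : u = rw⁻¹ • w - rv⁻¹ • v)
    (huu : 0 < B u u) (huω : 0 < B u ((s - 1) o)) :
    |rw - B v w * rv| < rw ∨ |rv - B v w * rw| < rv := by
  have hskew := SerreLattice.apply_sub_one_eq_zero_of_mem_ker_sq hserre hrank hstar hv₁ hw₁
  have hpair := SerreLattice.mul_mul_apply_sub_one_eq hserre hrv.ne' hrw.ne' hv hw hskew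
  rw [hwv, sub_zero, ← hu] at hpair
  have hh : 0 < B v w := hpair ▸ mul_pos (mul_pos hrv hrw) huω
  have hbound := SerreLattice.apply_mul_mul_lt_sq_add_sq hrv.ne' hrw.ne' hvv hww hwv (hu ▸ huu)
  exact abs_sub_mul_lt_or_abs_sub_mul_lt hrv hrw hh hbound

/-- Rudakov's rank reduction lemma: let `(v,w)` be an exceptional pair with
`r(v), r(w) > 0` in a Serre lattice over ℚ of surface* type with structure element `o`; set
`h := ⟨v,w⟩` and `u := (1/r(w))·w − (1/r(v))·v`. If `⟨u,u⟩ > 0` and `⟨u,(s−1)o⟩ > 0`, then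
the mutation `σ(v,w)` or `σ⁻¹(v,w)` strictly decreases `|r(v)| + |r(w)|`:
`|r(w) − h·r(v)| < r(w)` or `|r(v) − h·r(w)| < r(v)`. -/
theorem rank_reduction (V : Type*) [AddCommGroup V] [Module ℚ V]
    [FiniteDimensional ℚ V]
    (B : V →ₗ[ℚ] V →ₗ[ℚ] ℚ) (hB : ∀ v, (∀ w, B v w = 0) → v = 0)
    (s : V →ₗ[ℚ] V) (hbij : Function.Bijective s)
    (hserre : ∀ v w, B v (s w) = B w v)
    (huni : (s - 1) ^ Module.finrank ℚ V = 0)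
    (hrank : Module.finrank ℚ (LinearMap.range (s - 1)) ≤ 2)
    (hstar : (s - 1) ^ 2 ≠ 0)
    (o : V) (ho : IsCompl (Submodule.span ℚ {o}) (LinearMap.ker ((s - 1) ^ 2)))
    (v w v₁ w₁ : V) (rv rw : ℚ)
    (hv₁ : v₁ ∈ LinearMap.ker ((s - 1) ^ 2)) (hw₁ : w₁ ∈ LinearMap.ker ((s - 1) ^ 2))
    (hv : v = rv • o + v₁) (hw : w = rw • o + w₁)
    (hrv : 0 < rv) (hrw : 0 < rw)
    (hvv : B v v = 1) (hww : B w w = 1) (hwv : B w v = 0)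
    (u : V) (hu : u = rw⁻¹ • w - rv⁻¹ • v)
    (huu : 0 < B u u) (huω : 0 < B u ((s - 1) o)) :
    |rw - B v w * rv| < rw ∨ |rv - B v w * rw| < rv :=
  rank_reduction_general V B s hserre hrank hstar o v w v₁ w₁ rv rw hv₁ hw₁ hv hw hrv hrw hvv hww
    hwv u hu huu huω
end

section
/- Let (V, ⟨−,−⟩, s) be a Serre lattice over ℚ of surface* type with structure element o. Let (v, w) be an exceptional pair (⟨v,v⟩ = ⟨w,w⟩ = 1 and ⟨w,v⟩ = 0) with r(v) > 0 and r(w) > 0, set h := ⟨v, w⟩ and u := (1/r(w))·w − (1/r(v))·v. If ⟨u, u⟩ = 0 and ⟨u, (s−1)o⟩ > 0, then |r(w) − h·r(v)| < r(w), or |r(v) − h·r(w)| < r(v), or else h = 2 and r(v) = r(w). -/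
/-!
Isotropy of `u = w / r(w) - v / r(v)`, with `⟨v,v⟩ = ⟨w,w⟩ = 1` and `⟨w,v⟩ = 0`, is the Markov-type
relation `r(v)² + r(w)² = h·r(v)·r(w)`. It gives `r(w) - h·r(v) = -r(v)² / r(w)`, which is smaller
than `r(w)` in absolute value as soon as `r(v) < r(w)`; symmetrically when `r(w) < r(v)`, and for
`r(v) = r(w)` the relation forces `h = 2`.
-/

theorem LinearMap.apply_sub_smul_sub_smul {R M : Type*} [CommRing R] [AddCommGroup M] [Module R M]
    (B : M →ₗ[R] M →ₗ[R] R) (a b : R) (x y : M) :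
    B (a • x - b • y) (a • x - b • y) =
      a ^ 2 * B x x - a * b * (B x y + B y x) + b ^ 2 * B y y := by
  simp only [map_sub, map_smul, LinearMap.sub_apply, LinearMap.smul_apply, smul_eq_mul]
  ring

section

variable {K : Type*} [Field K] [LinearOrder K] [IsStrictOrderedRing K]

theorem sq_add_sq_eq_mul_mul_of_isotropic {a b h : K} (ha : a ≠ 0) (hb : b ≠ 0)
    (hiso : b⁻¹ ^ 2 - b⁻¹ * a⁻¹ * h + a⁻¹ ^ 2 = 0) :
    a ^ 2 + b ^ 2 = h * a * b := by
  field_simp at hiso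
  linear_combination hiso

theorem abs_sub_mul_lt_of_lt {a b h : K} (ha : 0 < a) (hab : a < b)
    (hrel : a ^ 2 + b ^ 2 = h * a * b) :
    |b - h * a| < b := by
  have hb : 0 < b := ha.trans hab
  have hdiff : b - h * a = -(a ^ 2 / b) := by
    field_simp
    linear_combination hrel
  rw [hdiff, abs_neg, abs_of_pos (by positivity), div_lt_iff₀ hb]
  nlinarith

theorem eq_two_of_sq_add_sq_eq_mul_mul {a h : K} (ha : a ≠ 0)
    (hrel : a ^ 2 + a ^ 2 = h * a * a) :
    h = 2 := by
  have : (h - 2) * a ^ 2 = 0 := by linear_combination -hrel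
  simpa [sub_eq_zero, ha] using this

end

theorem rank_reduction_degenerate_general (V : Type*) [AddCommGroup V] [Module ℚ V]
    (B : V →ₗ[ℚ] V →ₗ[ℚ] ℚ)
    (v w : V) (rv rw : ℚ)
    (hrv : 0 < rv) (hrw : 0 < rw)
    (hvv : B v v = 1) (hww : B w w = 1) (hwv : B w v = 0)
    (u : V) (hu : u = rw⁻¹ • w - rv⁻¹ • v)
    (huu : B u u = 0) :
    |rw - B v w * rv| < rw ∨ |rv - B v w * rw| < rv ∨ (B v w = 2 ∧ rv = rw) := by
  have hiso : rw⁻¹ ^ 2 - rw⁻¹ * rv⁻¹ * B v w + rv⁻¹ ^ 2 = 0 := by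
    rw [← huu, hu, LinearMap.apply_sub_smul_sub_smul, hvv, hww, hwv]
    ring
  have hrel := sq_add_sq_eq_mul_mul_of_isotropic hrv.ne' hrw.ne' hiso
  rcases lt_trichotomy rv rw with hlt | rfl | hgt
  · exact Or.inl (abs_sub_mul_lt_of_lt hrv hlt hrel)
  · exact Or.inr (Or.inr ⟨eq_two_of_sq_add_sq_eq_mul_mul hrv.ne' hrel, rfl⟩)
  · refine Or.inr (Or.inl (abs_sub_mul_lt_of_lt hrw hgt ?_))
    linear_combination hrel

/-- degenerate rank reduction: with notation as in Rudakov's lemma, if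
`⟨u,u⟩ = 0` and `⟨u,(s−1)o⟩ > 0`, then `|r(w) − h·r(v)| < r(w)`, or `|r(v) − h·r(w)| < r(v)`,
or else `h = 2` and `r(v) = r(w)`. -/
theorem rank_reduction_degenerate (V : Type*) [AddCommGroup V] [Module ℚ V]
    [FiniteDimensional ℚ V]
    (B : V →ₗ[ℚ] V →ₗ[ℚ] ℚ) (hB : ∀ v, (∀ w, B v w = 0) → v = 0)
    (s : V →ₗ[ℚ] V) (hbij : Function.Bijective s)
    (hserre : ∀ v w, B v (s w) = B w v)
    (huni : (s - 1) ^ Module.finrank ℚ V = 0)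
    (hrank : Module.finrank ℚ (LinearMap.range (s - 1)) ≤ 2)
    (hstar : (s - 1) ^ 2 ≠ 0)
    (o : V) (ho : IsCompl (Submodule.span ℚ {o}) (LinearMap.ker ((s - 1) ^ 2)))
    (v w v₁ w₁ : V) (rv rw : ℚ)
    (hv₁ : v₁ ∈ LinearMap.ker ((s - 1) ^ 2)) (hw₁ : w₁ ∈ LinearMap.ker ((s - 1) ^ 2))
    (hv : v = rv • o + v₁) (hw : w = rw • o + w₁)
    (hrv : 0 < rv) (hrw : 0 < rw)
    (hvv : B v v = 1) (hww : B w w = 1) (hwv : B w v = 0)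
    (u : V) (hu : u = rw⁻¹ • w - rv⁻¹ • v)
    (huu : B u u = 0) (huω : 0 < B u ((s - 1) o)) :
    |rw - B v w * rv| < rw ∨ |rv - B v w * rw| < rv ∨ (B v w = 2 ∧ rv = rw) :=
  rank_reduction_degenerate_general V B v w rv rw hrv hrw hvv hww hwv u hu huu
end

section
/- Let H be a 2-dimensional real vector space equipped with a nondegenerate symmetric bilinear form (−,−), and let (T_i)_{i∈ℤ} be vectors in H satisfying T_{i+4} = T_i, (T_i, T_{i+2}) = 0 and (T_i, T_{i+1}) > 0 for all i ∈ ℤ. Then (−,−) is indefinite: it is neither positive definite nor negative definite (equivalently, since it is nondegenerate on a 2-dimensional space, there exist x, y ∈ H with (x,x) > 0 and (y,y) < 0). -/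
lemma iso_indef {H : Type*} [AddCommGroup H] [Module ℝ H]
    (B : H →ₗ[ℝ] H →ₗ[ℝ] ℝ) (hsymm : ∀ x y, B x y = B y x)
    (x y : H) (hx : B x x = 0) (hb : 0 < B x y) :
    (∃ u, 0 < B u u) ∧ (∃ v, B v v < 0) := by
  set b := B x y with hbdef
  set d := B y y with hddef
  set ε := 1 / (|d| + 1) with hε
  have hεpos : 0 < ε := by positivity
  have hεd : |ε * d| < 1 := by
    rw [abs_mul, hε, abs_of_pos (by positivity : (0:ℝ) < 1/(|d|+1))]
    rw [div_mul_eq_mul_div, one_mul, div_lt_one (by positivity)]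
    linarith [abs_nonneg d]
  have key : ∀ t : ℝ, B (x + t • y) (x + t • y) = 2 * t * b + t^2 * d := by
    intro t
    have := hsymm x y
    simp [map_add, map_smul, smul_eq_mul, hx, ← hbdef, ← hddef, this]
    ring_nf
    rw [hsymm y x, ← hbdef]
    ring
  constructor
  · refine ⟨x + (ε * b) • y, ?_⟩
    rw [key]
    have h1 : -1 < ε * d := (abs_lt.mp hεd).1
    nlinarith [sq_nonneg b, mul_pos hεpos hb]
  · refine ⟨x + (-(ε * b)) • y, ?_⟩
    rw [key]
    have h2 : ε * d < 1 := (abs_lt.mp hεd).2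
    nlinarith [sq_nonneg b, mul_pos hεpos hb]

lemma coords {H : Type*} [AddCommGroup H] [Module ℝ H] [FiniteDimensional ℝ H]
    (hdim : Module.finrank ℝ H = 2)
    (B : H →ₗ[ℝ] H →ₗ[ℝ] ℝ)
    (x y : H) (ha : B x x ≠ 0) (hc : B y y ≠ 0) (hxy : B x y = 0) (hyx : B y x = 0)
    (v : H) : ∃ α β : ℝ, v = α • x + β • y := by
  have hli : LinearIndependent ℝ ![x, y] := by
    rw [LinearIndependent.pair_iff]
    intro s t hst
    have h1 : B x (s • x + t • y) = 0 := by rw [hst]; simp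
    have h2 : B y (s • x + t • y) = 0 := by rw [hst]; simp
    simp [map_add, map_smul, smul_eq_mul, hxy, hyx] at h1 h2
    constructor
    · rcases h1 with h | h
      · exact h
      · exact absurd h ha
    · rcases h2 with h | h
      · exact h
      · exact absurd h hc
  have hspan : Submodule.span ℝ (Set.range ![x, y]) = ⊤ := by
    apply LinearIndependent.span_eq_top_of_card_eq_finrank hli
    simp [hdim]
  have hv : v ∈ Submodule.span ℝ ({x, y} : Set H) := by
    have : (Set.range ![x, y] : Set H) = {x, y} := by
      simp [Matrix.range_cons, Matrix.range_empty, Set.pair_comm]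
    rw [← this, hspan]; trivial
  rw [Submodule.mem_span_pair] at hv
  obtain ⟨α, β, h⟩ := hv
  exact ⟨α, β, h.symm⟩

/-- if a nondegenerate symmetric bilinear form on a 2-dimensional real vector
space admits vectors `(T_i)_{i∈ℤ}` with `T_{i+4} = T_i`, `(T_i, T_{i+2}) = 0` and
`(T_i, T_{i+1}) > 0`, then the form is indefinite. -/
theorem form_indefinite (H : Type*) [AddCommGroup H] [Module ℝ H] [FiniteDimensional ℝ H]
    (hdim : Module.finrank ℝ H = 2)
    (B : H →ₗ[ℝ] H →ₗ[ℝ] ℝ) (hsymm : ∀ x y, B x y = B y x)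
    (hnd : ∀ x, (∀ y, B x y = 0) → x = 0)
    (T : ℤ → H)
    (hper : ∀ i, T (i + 4) = T i)
    (horth : ∀ i, B (T i) (T (i + 2)) = 0)
    (hpos : ∀ i, 0 < B (T i) (T (i + 1))) :
    (∃ x, 0 < B x x) ∧ (∃ y, B y y < 0) := by
  have hT4 : T 4 = T 0 := by have := hper 0; norm_num at this; exact this
  have h02 : B (T 0) (T 2) = 0 := by have := horth 0; norm_num at this; exact this
  have h13 : B (T 1) (T 3) = 0 := by have := horth 1; norm_num at this; exact this
  have h01 : 0 < B (T 0) (T 1) := by have := hpos 0; norm_num at this; exact this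
  have h12 : 0 < B (T 1) (T 2) := by have := hpos 1; norm_num at this; exact this
  have h23 : 0 < B (T 2) (T 3) := by have := hpos 2; norm_num at this; exact this
  have h30 : 0 < B (T 3) (T 0) := by
    have := hpos 3; norm_num at this; rwa [hT4] at this
  set a := B (T 0) (T 0) with hadef
  set c := B (T 2) (T 2) with hcdef
  by_cases ha : a = 0
  · exact iso_indef B hsymm (T 0) (T 1) ha h01
  by_cases hc : c = 0
  · exact iso_indef B hsymm (T 2) (T 3) hc h23
  rcases lt_or_gt_of_ne ha with haneg | hapos
  · rcases lt_or_gt_of_ne hc with hcneg | hcpos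
    · -- both negative: contradiction
      exfalso
      have h20 : B (T 2) (T 0) = 0 := by rw [hsymm]; exact h02
      obtain ⟨α, β, hαβ⟩ := coords hdim B (T 0) (T 2) ha hc h02 h20 (T 1)
      obtain ⟨γ, δ, hγδ⟩ := coords hdim B (T 0) (T 2) ha hc h02 h20 (T 3)
      have e1 : B (T 0) (T 1) = α * a := by
        rw [hαβ]; simp [map_add, map_smul, smul_eq_mul, h02, ← hadef, mul_comm]
      have e2 : B (T 2) (T 1) = β * c := by
        rw [hαβ]; simp [map_add, map_smul, smul_eq_mul, h20, ← hcdef, mul_comm]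
      have e3 : B (T 0) (T 3) = γ * a := by
        rw [hγδ]; simp [map_add, map_smul, smul_eq_mul, h02, ← hadef, mul_comm]
      have e4 : B (T 2) (T 3) = δ * c := by
        rw [hγδ]; simp [map_add, map_smul, smul_eq_mul, h20, ← hcdef, mul_comm]
      have e5 : B (T 1) (T 3) = α * γ * a + β * δ * c := by
        rw [hαβ]
        simp [map_add, map_smul, smul_eq_mul]
        rw [e3, e4]
        ring
      have k1 : 0 < α * a := by rw [← e1]; exact h01
      have k2 : 0 < β * c := by rw [← e2, hsymm]; exact h12
      have k3 : 0 < γ * a := by rw [← e3, hsymm]; exact h30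
      have k4 : 0 < δ * c := by rw [← e4]; exact h23
      rw [h13] at e5
      have e6 : (α * γ * a + β * δ * c) * (a * c) = 0 := by rw [← e5]; ring
      nlinarith [mul_pos k1 k3, mul_pos k2 k4, e6, haneg, hcneg]
    · exact ⟨⟨T 2, hcpos⟩, ⟨T 0, haneg⟩⟩
  · rcases lt_or_gt_of_ne hc with hcneg | hcpos
    · exact ⟨⟨T 0, hapos⟩, ⟨T 2, hcneg⟩⟩
    · -- both positive: contradiction
      exfalso
      have h20 : B (T 2) (T 0) = 0 := by rw [hsymm]; exact h02
      obtain ⟨α, β, hαβ⟩ := coords hdim B (T 0) (T 2) ha hc h02 h20 (T 1)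
      obtain ⟨γ, δ, hγδ⟩ := coords hdim B (T 0) (T 2) ha hc h02 h20 (T 3)
      have e1 : B (T 0) (T 1) = α * a := by
        rw [hαβ]; simp [map_add, map_smul, smul_eq_mul, h02, ← hadef, mul_comm]
      have e2 : B (T 2) (T 1) = β * c := by
        rw [hαβ]; simp [map_add, map_smul, smul_eq_mul, h20, ← hcdef, mul_comm]
      have e3 : B (T 0) (T 3) = γ * a := by
        rw [hγδ]; simp [map_add, map_smul, smul_eq_mul, h02, ← hadef, mul_comm]
      have e4 : B (T 2) (T 3) = δ * c := by
        rw [hγδ]; simp [map_add, map_smul, smul_eq_mul, h20, ← hcdef, mul_comm]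
      have e5 : B (T 1) (T 3) = α * γ * a + β * δ * c := by
        rw [hαβ]
        simp [map_add, map_smul, smul_eq_mul]
        rw [e3, e4]
        ring
      have k1 : 0 < α * a := by rw [← e1]; exact h01
      have k2 : 0 < β * c := by rw [← e2, hsymm]; exact h12
      have k3 : 0 < γ * a := by rw [← e3, hsymm]; exact h30
      have k4 : 0 < δ * c := by rw [← e4]; exact h23
      rw [h13] at e5
      have e6 : (α * γ * a + β * δ * c) * (a * c) = 0 := by rw [← e5]; ring
      nlinarith [mul_pos k1 k3, mul_pos k2 k4, e6, hapos, hcpos]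
end

section
/- Let H be a 2-dimensional real vector space equipped with a nondegenerate symmetric bilinear form (−,−). Suppose ω ∈ H with ω ≠ 0 and (T_i)_{i∈ℤ} are vectors in H satisfying: T_{i+4} = T_i for all i, (T_i, T_{i+2}) = 0 for all i, (T_i, T_{i+1}) > 0 for all i, and for every i, if (T_i, T_i) ≥ 0 then (T_i, ω) < 0. Then either there exists an i with (T_i, T_i) = 0 and (T_{i+2}, T_{i+2}) = 0, or there exists an i with (T_i, T_i) < 0 and (T_i, ω) < 0. -/
set_option maxHeartbeats 1000000

lemma repr_pair {H : Type*} [AddCommGroup H] [Module ℝ H] [FiniteDimensional ℝ H]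
    (hdim : Module.finrank ℝ H = 2) {x y : H}
    (hli : LinearIndependent ℝ ![x, y]) (v : H) : ∃ a b : ℝ, v = a • x + b • y := by
  have hsp : Submodule.span ℝ (Set.range ![x, y]) = ⊤ :=
    hli.span_eq_top_of_card_eq_finrank (by simp [hdim])
  have hr : (Set.range ![x, y] : Set H) = {x, y} := by
    ext z; simp [Matrix.range_cons, Matrix.range_empty]; tauto
  rw [hr] at hsp
  have hv : v ∈ Submodule.span ℝ ({x, y} : Set H) := hsp ▸ Submodule.mem_top
  obtain ⟨a, b, hab⟩ := Submodule.mem_span_pair.1 hv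
  exact ⟨a, b, hab.symm⟩

lemma indep_pair {H : Type*} [AddCommGroup H] [Module ℝ H]
    (B : H →ₗ[ℝ] H →ₗ[ℝ] ℝ) (hsymm : ∀ x y, B x y = B y x) {t0 t1 t2 : H}
    (h02 : B t0 t2 = 0) (h01 : 0 < B t0 t1) (h12 : 0 < B t1 t2)
    (hq : B t0 t0 ≠ 0 ∨ B t2 t2 ≠ 0) :
    LinearIndependent ℝ ![t0, t2] := by
  rw [LinearIndependent.pair_iff]
  intro s t hst
  have e0 : s * B t0 t0 = 0 := by
    have := congrArg (fun v => B t0 v) hst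
    simpa [map_add, map_smul, smul_eq_mul, h02] using this
  have e2 : t * B t2 t2 = 0 := by
    have := congrArg (fun v => B t2 v) hst
    have h20 : B t2 t0 = 0 := (hsymm t2 t0).trans h02
    simpa [map_add, map_smul, smul_eq_mul, h20] using this
  have e1 : s * B t0 t1 + t * B t1 t2 = 0 := by
    have := congrArg (fun v => B v t1) hst
    have h21 : B t2 t1 = B t1 t2 := hsymm t2 t1
    simpa [map_add, map_smul, LinearMap.add_apply, LinearMap.smul_apply, smul_eq_mul,
      h21] using this
  rcases hq with hq | hq
  · have hs : s = 0 := by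
      rcases mul_eq_zero.1 e0 with h | h
      · exact h
      · exact absurd h hq
    refine ⟨hs, ?_⟩
    rw [hs] at e1
    simp only [zero_mul, zero_add] at e1
    rcases mul_eq_zero.1 e1 with h | h
    · exact h
    · exact absurd h h12.ne'
  · have ht : t = 0 := by
      rcases mul_eq_zero.1 e2 with h | h
      · exact h
      · exact absurd h hq
    rw [ht] at e1
    simp only [zero_mul, add_zero] at e1
    rcases mul_eq_zero.1 e1 with h | h
    · exact ⟨h, ht⟩
    · exact absurd h h01.ne'

lemma case6 {H : Type*} [AddCommGroup H] [Module ℝ H] [FiniteDimensional ℝ H]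
    (hdim : Module.finrank ℝ H = 2)
    (B : H →ₗ[ℝ] H →ₗ[ℝ] ℝ) (hsymm : ∀ x y, B x y = B y x)
    (ω t0 t1 t2 t3 : H)
    (h02 : B t0 t2 = 0) (h13 : B t1 t3 = 0)
    (h01 : 0 < B t0 t1) (h12 : 0 < B t1 t2) (h23 : 0 < B t2 t3) (h30 : 0 < B t3 t0)
    (hq0 : 0 < B t0 t0) (hq2 : B t2 t2 < 0) (hω0 : B t0 ω < 0) :
    (B t1 t1 = 0 ∧ B t3 t3 = 0) ∨ (B t1 t1 < 0 ∧ B t1 ω < 0) ∨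
      (B t2 t2 < 0 ∧ B t2 ω < 0) ∨ (B t3 t3 < 0 ∧ B t3 ω < 0) := by
  have h20 : B t2 t0 = 0 := (hsymm t2 t0).trans h02
  have hli : LinearIndependent ℝ ![t0, t2] :=
    indep_pair B hsymm h02 h01 h12 (Or.inl hq0.ne')
  obtain ⟨a, b, hab⟩ := repr_pair hdim hli t1
  obtain ⟨c, d, hcd⟩ := repr_pair hdim hli t3
  obtain ⟨α, β, hω⟩ := repr_pair hdim hli ω
  -- basic expansions
  have e01 : B t0 t1 = a * B t0 t0 := by
    rw [hab]; simp [map_add, map_smul, smul_eq_mul, h02]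
  have e12 : B t1 t2 = b * B t2 t2 := by
    rw [hab]; simp [map_add, map_smul, LinearMap.add_apply, LinearMap.smul_apply,
      smul_eq_mul, h02]
  have e30 : B t3 t0 = c * B t0 t0 := by
    rw [hcd]; simp [map_add, map_smul, LinearMap.add_apply, LinearMap.smul_apply,
      smul_eq_mul, h20]
  have e23 : B t2 t3 = d * B t2 t2 := by
    rw [hcd]; simp [map_add, map_smul, smul_eq_mul, h20]
  have e13 : B t1 t3 = a * c * B t0 t0 + b * d * B t2 t2 := by
    rw [hab, hcd]
    simp only [map_add, map_smul, LinearMap.add_apply, LinearMap.smul_apply,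
      smul_eq_mul, h02, h20]
    ring
  have eq1 : B t1 t1 = a ^ 2 * B t0 t0 + b ^ 2 * B t2 t2 := by
    conv_lhs => rw [hab]
    simp only [map_add, map_smul, LinearMap.add_apply, LinearMap.smul_apply,
      smul_eq_mul, h02, h20]
    ring
  have eq3 : B t3 t3 = c ^ 2 * B t0 t0 + d ^ 2 * B t2 t2 := by
    conv_lhs => rw [hcd]
    simp only [map_add, map_smul, LinearMap.add_apply, LinearMap.smul_apply,
      smul_eq_mul, h02, h20]
    ring
  have eω0 : B t0 ω = α * B t0 t0 := by
    rw [hω]; simp [map_add, map_smul, smul_eq_mul, h02]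
  have eω2 : B t2 ω = β * B t2 t2 := by
    rw [hω]; simp [map_add, map_smul, smul_eq_mul, h20]
  have eω1 : B t1 ω = α * (a * B t0 t0) + β * (b * B t2 t2) := by
    rw [hab, hω]
    simp only [map_add, map_smul, LinearMap.add_apply, LinearMap.smul_apply,
      smul_eq_mul, h02, h20]
    ring
  have eω3 : B t3 ω = α * (c * B t0 t0) + β * (d * B t2 t2) := by
    rw [hcd, hω]
    simp only [map_add, map_smul, LinearMap.add_apply, LinearMap.smul_apply,
      smul_eq_mul, h02, h20]
    ring
  rw [e01] at h01; rw [e12] at h12; rw [e30] at h30; rw [e23] at h23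
  rw [eω0] at hω0
  -- signs
  have ha : 0 < a := by nlinarith
  have hb : b < 0 := by nlinarith
  have hc : 0 < c := by nlinarith
  have hd : d < 0 := by nlinarith
  have hα : α < 0 := by nlinarith
  have hE : a * c * B t0 t0 + b * d * B t2 t2 = 0 := by rw [← e13, h13]
  by_cases hc2 : B t2 ω < 0
  · exact Or.inr (Or.inr (Or.inl ⟨hq2, hc2⟩))
  push_neg at hc2
  rw [eω2] at hc2
  have hβ : β ≤ 0 := by nlinarith
  have hω1 : B t1 ω < 0 := by rw [eω1]; nlinarith
  have hω3 : B t3 ω < 0 := by rw [eω3]; nlinarith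
  by_cases hc1 : B t1 t1 < 0
  · exact Or.inr (Or.inl ⟨hc1, hω1⟩)
  push_neg at hc1
  by_cases hc3 : B t3 t3 < 0
  · exact Or.inr (Or.inr (Or.inr ⟨hc3, hω3⟩))
  push_neg at hc3
  left
  rw [eq1] at hc1 ⊢
  rw [eq3] at hc3 ⊢
  set q0 := B t0 t0 with hq0e
  set q2 := B t2 t2 with hq2e
  clear_value q0 q2
  clear e01 e12 e30 e23 e13 eq1 eq3 eω0 eω2 eω1 eω3 hω1 hω3 hab hcd hω hli h20 h02 h13 hq0e hq2e
  have hid : (a ^ 2 * q0 + b ^ 2 * q2) * (c ^ 2 * q0 + d ^ 2 * q2) =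
      q0 * q2 * (a * d - b * c) ^ 2 + (a * c * q0 + b * d * q2) ^ 2 := by ring
  rw [hE] at hid
  have hq02 : q0 * q2 < 0 := mul_neg_of_pos_of_neg hq0 hq2
  have hprod : (a ^ 2 * q0 + b ^ 2 * q2) * (c ^ 2 * q0 + d ^ 2 * q2) ≤ 0 := by
    rw [hid]
    nlinarith [sq_nonneg (a * d - b * c), mul_nonpos_of_nonpos_of_nonneg hq02.le
      (sq_nonneg (a * d - b * c))]
  have hprod0 : (a ^ 2 * q0 + b ^ 2 * q2) * (c ^ 2 * q0 + d ^ 2 * q2) = 0 :=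
    le_antisymm hprod (mul_nonneg hc1 hc3)
  have hadbc : a * d - b * c = 0 := by
    rw [hprod0] at hid
    have h' : q0 * q2 * (a * d - b * c) ^ 2 = 0 := by linarith [hid]
    have hsle : (a * d - b * c) ^ 2 ≤ 0 := by nlinarith [sq_nonneg (a * d - b * c)]
    have hs0 : (a * d - b * c) ^ 2 = 0 := le_antisymm hsle (sq_nonneg _)
    exact pow_eq_zero_iff two_ne_zero |>.1 hs0
  have hrel : a ^ 2 * (c ^ 2 * q0 + d ^ 2 * q2) = c ^ 2 * (a ^ 2 * q0 + b ^ 2 * q2) := by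
    linear_combination (a * d + b * c) * q2 * hadbc
  have hrel2 : d ^ 2 * (a ^ 2 * q0 + b ^ 2 * q2) = b ^ 2 * (c ^ 2 * q0 + d ^ 2 * q2) := by
    linear_combination q0 * (a * d + b * c) * hadbc
  constructor
  · by_contra hne
    have h1pos : 0 < a ^ 2 * q0 + b ^ 2 * q2 := lt_of_le_of_ne hc1 (Ne.symm hne)
    have h3pos : 0 < c ^ 2 * q0 + d ^ 2 * q2 := by
      nlinarith [hrel, mul_pos (mul_pos hc hc) h1pos, mul_pos ha ha]
    nlinarith [mul_pos h1pos h3pos]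
  · by_contra hne
    have h3pos : 0 < c ^ 2 * q0 + d ^ 2 * q2 := lt_of_le_of_ne hc3 (Ne.symm hne)
    have h1pos : 0 < a ^ 2 * q0 + b ^ 2 * q2 := by
      nlinarith [hrel2, mul_pos (mul_pos_of_neg_of_neg hb hb) h3pos, mul_pos_of_neg_of_neg hd hd]
    nlinarith [mul_pos h1pos h3pos]

lemma key2 {H : Type*} [AddCommGroup H] [Module ℝ H] [FiniteDimensional ℝ H]
    (hdim : Module.finrank ℝ H = 2)
    (B : H →ₗ[ℝ] H →ₗ[ℝ] ℝ) (hsymm : ∀ x y, B x y = B y x)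
    (ω t0 t1 t2 t3 : H)
    (h02 : B t0 t2 = 0) (h13 : B t1 t3 = 0)
    (h01 : 0 < B t0 t1) (h12 : 0 < B t1 t2) (h23 : 0 < B t2 t3) (h30 : 0 < B t3 t0)
    (hn0 : 0 ≤ B t0 t0 → B t0 ω < 0) (hn2 : 0 ≤ B t2 t2 → B t2 ω < 0)
    (h0 : 0 ≤ B t0 t0) :
    (B t0 t0 = 0 ∧ B t2 t2 = 0) ∨ (B t1 t1 = 0 ∧ B t3 t3 = 0) ∨
      (B t1 t1 < 0 ∧ B t1 ω < 0) ∨ (B t2 t2 < 0 ∧ B t2 ω < 0) ∨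
      (B t3 t3 < 0 ∧ B t3 ω < 0) := by
  have h20 : B t2 t0 = 0 := (hsymm t2 t0).trans h02
  have hω0 : B t0 ω < 0 := hn0 h0
  rcases lt_trichotomy (B t2 t2) 0 with hq2 | hq2 | hq2
  · -- q2 < 0, need q0 > 0
    have hq0 : 0 < B t0 t0 := by
      rcases lt_or_eq_of_le h0 with h | h
      · exact h
      · exfalso
        have hli : LinearIndependent ℝ ![t0, t2] :=
          indep_pair B hsymm h02 h01 h12 (Or.inr hq2.ne)
        obtain ⟨α, β, hω⟩ := repr_pair hdim hli ω
        have : B t0 ω = α * B t0 t0 := by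
          rw [hω]; simp [map_add, map_smul, smul_eq_mul, h02]
        rw [this, ← h] at hω0
        simp at hω0
    rcases case6 hdim B hsymm ω t0 t1 t2 t3 h02 h13 h01 h12 h23 h30 hq0 hq2 hω0 with
      h | h | h | h
    · exact Or.inr (Or.inl h)
    · exact Or.inr (Or.inr (Or.inl h))
    · exact Or.inr (Or.inr (Or.inr (Or.inl h)))
    · exact Or.inr (Or.inr (Or.inr (Or.inr h)))
  · -- q2 = 0
    rcases eq_or_lt_of_le h0 with h | hq0
    · exact Or.inl ⟨h.symm, hq2⟩
    · exfalso
      have hli : LinearIndependent ℝ ![t0, t2] :=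
        indep_pair B hsymm h02 h01 h12 (Or.inl hq0.ne')
      obtain ⟨α, β, hω⟩ := repr_pair hdim hli ω
      have h2ω : B t2 ω = β * B t2 t2 := by
        rw [hω]; simp [map_add, map_smul, smul_eq_mul, h20]
      have := hn2 hq2.ge
      rw [h2ω, hq2, mul_zero] at this
      exact absurd this (lt_irrefl 0)
  · -- q2 > 0: need q0 > 0 as above, then contradiction
    exfalso
    have hq0 : 0 < B t0 t0 := by
      rcases lt_or_eq_of_le h0 with h | h
      · exact h
      · exfalso
        have hli : LinearIndependent ℝ ![t0, t2] :=
          indep_pair B hsymm h02 h01 h12 (Or.inr hq2.ne')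
        obtain ⟨α, β, hω⟩ := repr_pair hdim hli ω
        have : B t0 ω = α * B t0 t0 := by
          rw [hω]; simp [map_add, map_smul, smul_eq_mul, h02]
        rw [this, ← h] at hω0
        simp at hω0
    have hli : LinearIndependent ℝ ![t0, t2] :=
      indep_pair B hsymm h02 h01 h12 (Or.inl hq0.ne')
    obtain ⟨a, b, hab⟩ := repr_pair hdim hli t1
    obtain ⟨c, d, hcd⟩ := repr_pair hdim hli t3
    have e01 : B t0 t1 = a * B t0 t0 := by
      rw [hab]; simp [map_add, map_smul, smul_eq_mul, h02]
    have e12 : B t1 t2 = b * B t2 t2 := by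
      rw [hab]; simp [map_add, map_smul, LinearMap.add_apply, LinearMap.smul_apply,
        smul_eq_mul, h02]
    have e30 : B t3 t0 = c * B t0 t0 := by
      rw [hcd]; simp [map_add, map_smul, LinearMap.add_apply, LinearMap.smul_apply,
        smul_eq_mul, h20]
    have e23 : B t2 t3 = d * B t2 t2 := by
      rw [hcd]; simp [map_add, map_smul, smul_eq_mul, h20]
    have e13 : B t1 t3 = a * c * B t0 t0 + b * d * B t2 t2 := by
      rw [hab, hcd]
      simp only [map_add, map_smul, LinearMap.add_apply, LinearMap.smul_apply,
        smul_eq_mul, h02, h20]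
      ring
    rw [e01] at h01; rw [e12] at h12; rw [e30] at h30; rw [e23] at h23
    have ha : 0 < a := by nlinarith
    have hb : 0 < b := by nlinarith
    have hc : 0 < c := by nlinarith
    have hd : 0 < d := by nlinarith
    rw [h13] at e13
    nlinarith [mul_pos (mul_pos ha hc) hq0, mul_pos (mul_pos hb hd) hq2]

lemma key {H : Type*} [AddCommGroup H] [Module ℝ H] [FiniteDimensional ℝ H]
    (hdim : Module.finrank ℝ H = 2)
    (B : H →ₗ[ℝ] H →ₗ[ℝ] ℝ) (hsymm : ∀ x y, B x y = B y x)
    (ω t0 t1 t2 t3 : H)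
    (h02 : B t0 t2 = 0) (h13 : B t1 t3 = 0)
    (h01 : 0 < B t0 t1) (h12 : 0 < B t1 t2) (h23 : 0 < B t2 t3) (h30 : 0 < B t3 t0)
    (hn0 : 0 ≤ B t0 t0 → B t0 ω < 0) (hn2 : 0 ≤ B t2 t2 → B t2 ω < 0) :
    (B t0 t0 = 0 ∧ B t2 t2 = 0) ∨ (B t1 t1 = 0 ∧ B t3 t3 = 0) ∨
      (B t0 t0 < 0 ∧ B t0 ω < 0) ∨ (B t1 t1 < 0 ∧ B t1 ω < 0) ∨
      (B t2 t2 < 0 ∧ B t2 ω < 0) ∨ (B t3 t3 < 0 ∧ B t3 ω < 0) := by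
  have h20 : B t2 t0 = 0 := (hsymm t2 t0).trans h02
  have h31 : B t3 t1 = 0 := (hsymm t3 t1).trans h13
  rcases le_or_gt 0 (B t0 t0) with h0 | h0
  · rcases key2 hdim B hsymm ω t0 t1 t2 t3 h02 h13 h01 h12 h23 h30 hn0 hn2 h0 with
      h | h | h | h | h
    · exact Or.inl h
    · exact Or.inr (Or.inl h)
    · exact Or.inr (Or.inr (Or.inr (Or.inl h)))
    · exact Or.inr (Or.inr (Or.inr (Or.inr (Or.inl h))))
    · exact Or.inr (Or.inr (Or.inr (Or.inr (Or.inr h))))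
  rcases le_or_gt 0 (B t2 t2) with h2 | h2
  · rcases key2 hdim B hsymm ω t2 t3 t0 t1 h20 h31 h23 h30 h01 h12 hn2 hn0 h2 with
      h | h | h | h | h
    · exact Or.inl ⟨h.2, h.1⟩
    · exact Or.inr (Or.inl ⟨h.2, h.1⟩)
    · exact Or.inr (Or.inr (Or.inr (Or.inr (Or.inr h))))
    · exact Or.inr (Or.inr (Or.inl h))
    · exact Or.inr (Or.inr (Or.inr (Or.inl h)))
  · -- both q0 < 0 and q2 < 0 : impossible
    exfalso
    have hli : LinearIndependent ℝ ![t0, t2] :=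
      indep_pair B hsymm h02 h01 h12 (Or.inl h0.ne)
    obtain ⟨a, b, hab⟩ := repr_pair hdim hli t1
    obtain ⟨c, d, hcd⟩ := repr_pair hdim hli t3
    have e01 : B t0 t1 = a * B t0 t0 := by
      rw [hab]; simp [map_add, map_smul, smul_eq_mul, h02]
    have e12 : B t1 t2 = b * B t2 t2 := by
      rw [hab]; simp [map_add, map_smul, LinearMap.add_apply, LinearMap.smul_apply,
        smul_eq_mul, h02]
    have e30 : B t3 t0 = c * B t0 t0 := by
      rw [hcd]; simp [map_add, map_smul, LinearMap.add_apply, LinearMap.smul_apply,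
        smul_eq_mul, h20]
    have e23 : B t2 t3 = d * B t2 t2 := by
      rw [hcd]; simp [map_add, map_smul, smul_eq_mul, h20]
    have e13 : B t1 t3 = a * c * B t0 t0 + b * d * B t2 t2 := by
      rw [hab, hcd]
      simp only [map_add, map_smul, LinearMap.add_apply, LinearMap.smul_apply,
        smul_eq_mul, h02, h20]
      ring
    rw [e01] at h01; rw [e12] at h12; rw [e30] at h30; rw [e23] at h23
    have ha : a < 0 := by nlinarith
    have hb : b < 0 := by nlinarith
    have hc : c < 0 := by nlinarith
    have hd : d < 0 := by nlinarith
    rw [h13] at e13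
    nlinarith [mul_neg_of_pos_of_neg (mul_pos_of_neg_of_neg ha hc) h0,
      mul_neg_of_pos_of_neg (mul_pos_of_neg_of_neg hb hd) h2]


/-- let `(−,−)` be a nondegenerate symmetric bilinear form on a 2-dimensional
real vector space, `ω ≠ 0`, and `(T_i)_{i∈ℤ}` vectors with `T_{i+4} = T_i`,
`(T_i, T_{i+2}) = 0`, `(T_i, T_{i+1}) > 0`, and such that `(T_i, T_i) ≥ 0` implies
`(T_i, ω) < 0`. Then either some `i` has `(T_i, T_i) = 0 = (T_{i+2}, T_{i+2})`, or some `i`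
has `(T_i, T_i) < 0` and `(T_i, ω) < 0`. -/
theorem sequence_dichotomy (H : Type*) [AddCommGroup H] [Module ℝ H] [FiniteDimensional ℝ H]
    (hdim : Module.finrank ℝ H = 2)
    (B : H →ₗ[ℝ] H →ₗ[ℝ] ℝ) (hsymm : ∀ x y, B x y = B y x)
    (hnd : ∀ x, (∀ y, B x y = 0) → x = 0)
    (ω : H) (hω : ω ≠ 0)
    (T : ℤ → H)
    (hper : ∀ i, T (i + 4) = T i)
    (horth : ∀ i, B (T i) (T (i + 2)) = 0)
    (hpos : ∀ i, 0 < B (T i) (T (i + 1)))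
    (hneg : ∀ i, 0 ≤ B (T i) (T i) → B (T i) ω < 0) :
    (∃ i, B (T i) (T i) = 0 ∧ B (T (i + 2)) (T (i + 2)) = 0) ∨
      (∃ i, B (T i) (T i) < 0 ∧ B (T i) ω < 0) := by
  have h02 : B (T 0) (T 2) = 0 := by have := horth 0; norm_num at this; exact this
  have h13 : B (T 1) (T 3) = 0 := by have := horth 1; norm_num at this; exact this
  have h01 : 0 < B (T 0) (T 1) := by have := hpos 0; norm_num at this; exact this
  have h12 : 0 < B (T 1) (T 2) := by have := hpos 1; norm_num at this; exact this
  have h23 : 0 < B (T 2) (T 3) := by have := hpos 2; norm_num at this; exact this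
  have h30 : 0 < B (T 3) (T 0) := by
    have h := hpos 3
    have h4 : T (3 + 1) = T 0 := by
      rw [show (3:ℤ) + 1 = 0 + 4 by norm_num, hper 0]
    rwa [h4] at h
  rcases key hdim B hsymm ω (T 0) (T 1) (T 2) (T 3) h02 h13 h01 h12 h23 h30
      (hneg 0) (hneg 2) with h | h | h | h | h | h
  · exact Or.inl ⟨0, by norm_num; exact h⟩
  · refine Or.inl ⟨1, ?_⟩
    norm_num
    exact h
  · exact Or.inr ⟨0, h⟩
  · exact Or.inr ⟨1, h⟩
  · exact Or.inr ⟨2, h⟩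
  · exact Or.inr ⟨3, h⟩
end

section
/- Let (K, ⟨−,−⟩, s) be an integral Serre lattice of surface type equipped with a codimension filtration (F¹, F²), and let z ∈ F²K. On K̃ := ℤ·f ⊕ K define the bilinear form extending ⟨−,−⟩ by ⟨f, f⟩ = 1, ⟨x, f⟩ = 0 and ⟨f, y⟩ = ⟨z, y⟩ for x, y ∈ K, and define s̃ by s̃(f) = f + z and s̃(y) = s(y) − ⟨y, z⟩·f for y ∈ K. Then (K̃, ⟨−,−⟩, s̃) is an integral Serre lattice (the extended form is nondegenerate, s̃ is an automorphism, and ⟨x, s̃ y⟩ = ⟨y, x⟩ for all x, y ∈ K̃) of surface type, and F¹K̃ := F¹K ⊕ ℤ·f, F²K̃ := F²K (extended to ℚ-subspaces of K̃ ⊗ ℚ) is a codimension filtration on K̃. -/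
open TensorProduct

variable {K : Type*} [AddCommGroup K]

/-- The blowup bilinear form on `K̃ = ℤ·f ⊕ K` (realized as `ℤ × K`, with `f = (1,0)`):
`⟨f,f⟩ = 1`, `⟨x,f⟩ = 0`, `⟨f,y⟩ = ⟨z,y⟩` for `x, y ∈ K`. -/
def blowupForm (B : K →ₗ[ℤ] K →ₗ[ℤ] ℤ) (z : K) :
    (ℤ × K) →ₗ[ℤ] (ℤ × K) →ₗ[ℤ] ℤ :=
  LinearMap.mk₂ ℤ (fun p q => p.1 * q.1 + p.1 * B z q.2 + B p.2 q.2)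
    (by intro p p' q; simp [add_mul]; ring)
    (by intro c p q; simp [smul_eq_mul]; ring)
    (by intro p q q'; simp [mul_add]; ring)
    (by intro c p q; simp [smul_eq_mul]; ring)

/-- The blowup Serre automorphism on `ℤ × K`: `s̃(f) = f + z`, `s̃(y) = s(y) − ⟨y,z⟩·f`. -/
def blowupAut (B : K →ₗ[ℤ] K →ₗ[ℤ] ℤ) (s : K →ₗ[ℤ] K) (z : K) :
    (ℤ × K) →ₗ[ℤ] (ℤ × K) where
  toFun p := (p.1 - B p.2 z, p.1 • z + s p.2)
  map_add' p q := by
    ext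
    · simp; ring
    · simp only [Prod.fst_add, Prod.snd_add, map_add, LinearMap.add_apply, add_smul,
        Prod.mk_add_mk]
      abel
  map_smul' c p := by
    ext
    · simp [smul_eq_mul]; ring
    · simp only [Prod.smul_fst, Prod.smul_snd, smul_eq_mul, map_smul, smul_add, mul_smul,
        RingHom.id_apply]

/-- An integral Serre lattice is of surface type if the base-changed automorphism
`s_ℚ` on `V := ℚ ⊗ K` is unipotent and `rank(s_ℚ − 1) ≤ 2`. -/
def IsSurfaceType {K : Type*} [AddCommGroup K] (s : K →ₗ[ℤ] K) : Prop :=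
  (LinearMap.baseChange ℚ s - 1) ^ (Module.finrank ℚ (ℚ ⊗[ℤ] K)) = 0 ∧
    Module.finrank ℚ (LinearMap.range (LinearMap.baseChange ℚ s - 1)) ≤ 2

/-- A codimension filtration on an integral Serre lattice of surface type: ℚ-subspaces
`F² ⊆ F¹` of `V = ℚ ⊗ K` with `(s−1)V ⊆ F¹`, `(s−1)F¹ ⊆ F²`, `(s−1)F² = 0`,
`dim F¹ = n − 1`, `dim F² = 1` and `⟨F¹, F²⟩ = 0`. -/
def IsCodimFiltration {K : Type*} [AddCommGroup K] (B : K →ₗ[ℤ] K →ₗ[ℤ] ℤ)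
    (s : K →ₗ[ℤ] K) (F1 F2 : Submodule ℚ (ℚ ⊗[ℤ] K)) : Prop :=
  F2 ≤ F1 ∧
    LinearMap.range (LinearMap.baseChange ℚ s - 1) ≤ F1 ∧
    Submodule.map (LinearMap.baseChange ℚ s - 1) F1 ≤ F2 ∧
    Submodule.map (LinearMap.baseChange ℚ s - 1) F2 = ⊥ ∧
    Module.finrank ℚ F1 = Module.finrank ℚ (ℚ ⊗[ℤ] K) - 1 ∧
    Module.finrank ℚ F2 = 1 ∧
    ∀ v ∈ F1, ∀ w ∈ F2, LinearMap.BilinForm.baseChange ℚ B v w = 0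


/-! Over `ℚ`, the blowup space is `(ℚ ⊗ K) ⊕ ℚ·f`, and `s̃ - 1` sends `f ↦ z` and
`v ↦ (s - 1) v - ⟨v, z⟩ f`. Since `z ∈ F²` is killed by `s - 1` and orthogonal to `F¹`, the
conditions for `(F¹ ⊕ ℚ·f, F²)` reduce to those for `(F¹, F²)`. Surface type then comes for free:
any codimension filtration forces `(s - 1)³ = 0`, and since `s - 1` maps the hyperplane `F¹` into
the line `F²`, its rank is at most `2`. On the lattice, `⟨z, z⟩ = 0` and
`⟨x, z⟩ = ⟨x, s z⟩ = ⟨z, x⟩` give the Serre identity for `s̃` and an explicit inverse of it. -/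

open LinearMap Module

section LinearAlgebra

variable {k E E' : Type*} [Field k] [AddCommGroup E] [Module k E] [AddCommGroup E']
  [Module k E'] [FiniteDimensional k E]

theorem finrank_range_add_finrank_le_of_map_le (f : E →ₗ[k] E') {P : Submodule k E}
    {Q : Submodule k E'} [FiniteDimensional k Q] (h : P.map f ≤ Q) :
    finrank k (range f) + finrank k P ≤ finrank k E + finrank k Q := by
  have hf := f.finrank_range_add_finrank_ker
  have hP := (f.domRestrict P).finrank_range_add_finrank_ker
  have hran : finrank k (range (f.domRestrict P)) ≤ finrank k Q := by
    rw [range_domRestrict]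
    exact Submodule.finrank_mono h
  have hker : finrank k (ker (f.domRestrict P)) ≤ finrank k (ker f) := by
    rw [← Submodule.finrank_map_subtype_eq P]
    refine Submodule.finrank_mono ?_
    rintro _ ⟨x, hx, rfl⟩
    simpa using hx
  omega

theorem pow_finrank_eq_zero_of_pow_eq_zero {t : End k E} {m : ℕ} (h : t ^ m = 0) :
    t ^ finrank k E = 0 := by
  simpa [h] using t.ker_pow_le_ker_pow_finrank m

end LinearAlgebra

section CodimFiltration

variable {B : K →ₗ[ℤ] K →ₗ[ℤ] ℤ} {s : K →ₗ[ℤ] K} {F1 F2 : Submodule ℚ (ℚ ⊗[ℤ] K)}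

theorem IsCodimFiltration.isSurfaceType [Module.Finite ℤ K]
    (h : IsCodimFiltration B s F1 F2) : IsSurfaceType s := by
  obtain ⟨h21, hrange, hF1, hF2, hd1, hd2, -⟩ := h
  set t := baseChange ℚ s - 1
  have hcube : t ^ 3 = 0 := by
    refine LinearMap.ext fun v => ?_
    have h1 : t v ∈ F1 := hrange (mem_range_self t v)
    have h2 : t (t v) ∈ F2 := hF1 (Submodule.mem_map_of_mem h1)
    have h3 : t (t (t v)) ∈ (⊥ : Submodule ℚ _) := hF2 ▸ Submodule.mem_map_of_mem h2
    simpa [pow_succ] using h3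
  refine ⟨pow_finrank_eq_zero_of_pow_eq_zero hcube, ?_⟩
  change finrank ℚ (range t) ≤ 2
  have hrank := finrank_range_add_finrank_le_of_map_le t hF1
  have hd := Submodule.finrank_mono h21
  omega

variable {z : K}

theorem IsCodimFiltration.apply_self_eq_zero (hfil : IsCodimFiltration B s F1 F2)
    (hz : (1 : ℚ) ⊗ₜ[ℤ] z ∈ F2) : B z z = 0 := by
  simpa using hfil.2.2.2.2.2.2 _ (hfil.1 hz) _ hz

theorem IsCodimFiltration.apply_map_right_eq (hfil : IsCodimFiltration B s F1 F2)
    (hz : (1 : ℚ) ⊗ₜ[ℤ] z ∈ F2) (x : K) : B x (s z) = B x z := by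
  have ht : (baseChange ℚ s - 1) ((1 : ℚ) ⊗ₜ[ℤ] z) ∈ (⊥ : Submodule ℚ _) :=
    hfil.2.2.2.1 ▸ Submodule.mem_map_of_mem hz
  have hsz : (1 : ℚ) ⊗ₜ[ℤ] s z = (1 : ℚ) ⊗ₜ[ℤ] z := by
    simpa [sub_eq_zero] using ht
  simpa using congr(BilinForm.baseChange ℚ B ((1 : ℚ) ⊗ₜ[ℤ] x) $hsz)

end CodimFiltration

section Lattice

variable {B : K →ₗ[ℤ] K →ₗ[ℤ] ℤ} {s : K →ₗ[ℤ] K} {z : K}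

theorem blowupForm_apply (p q : ℤ × K) :
    blowupForm B z p q = p.1 * q.1 + p.1 * B z q.2 + B p.2 q.2 := rfl

theorem blowupAut_apply (p : ℤ × K) :
    blowupAut B s z p = (p.1 - B p.2 z, p.1 • z + s p.2) := rfl

theorem blowupForm_nondegenerate (hB : ∀ v, (∀ w, B v w = 0) → v = 0) (p : ℤ × K)
    (hp : ∀ q, blowupForm B z p q = 0) : p = 0 := by
  have h1 : p.1 = 0 := by simpa [blowupForm_apply] using hp (1, 0)
  have h2 : p.2 = 0 := hB p.2 fun w => by simpa [blowupForm_apply, h1] using hp (0, w)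
  exact Prod.ext h1 h2

theorem blowupForm_blowupAut (hserre : ∀ v w, B v (s w) = B w v) (hzz : B z z = 0)
    (hz : ∀ x, B x z = B z x) (p q : ℤ × K) :
    blowupForm B z p (blowupAut B s z q) = blowupForm B z q p := by
  simp only [blowupForm_apply, blowupAut_apply, map_add, map_smul, smul_eq_mul, hserre, hzz,
    hz p.2]
  ring

theorem blowupAut_bijective (hs : Function.Bijective s) (hserre : ∀ v w, B v (s w) = B w v)
    (hzz : B z z = 0) : Function.Bijective (blowupAut B s z) := by
  set e := LinearEquiv.ofBijective s hs
  have he : ∀ x, s (e.symm x) = x := e.apply_symm_apply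
  have he' : ∀ x, e.symm (s x) = x := e.symm_apply_apply
  have hz : B (e.symm z) z = 0 := by rw [← hserre z, he, hzz]
  let g : ℤ × K → ℤ × K := fun q =>
    (q.1 + B (e.symm q.2) z, e.symm q.2 - (q.1 + B (e.symm q.2) z) • e.symm z)
  refine Function.bijective_iff_has_inverse.mpr ⟨g, fun p => ?_, fun q => ?_⟩
  · simp [g, blowupAut_apply, he', hz]
  · simp [g, blowupAut_apply, he, hz]

end Lattice

section RationalBlowup

variable (B : K →ₗ[ℤ] K →ₗ[ℤ] ℤ) (s : K →ₗ[ℤ] K) (z : K)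

-- `ε` is the rational class of the exceptional vector `f = (1, 0)` of `K̃ = ℤ × K`.
local notation "ι" => baseChange ℚ (inr ℤ ℤ K)
local notation "ε" => ((1 : ℚ) ⊗ₜ[ℤ] (((1 : ℤ), (0 : K)) : ℤ × K))

theorem intCast_mul_smul_exceptional (m : ℤ) (a : ℚ) : ((m : ℚ) * a) • ε = a ⊗ₜ (m, (0 : K)) := by
  rw [TensorProduct.smul_tmul', smul_eq_mul, mul_one, ← zsmul_eq_mul, TensorProduct.smul_tmul,
    Prod.smul_mk, smul_zero, smul_eq_mul, mul_one]

theorem baseChange_blowupAut_sub_one_exceptional :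
    (baseChange ℚ (blowupAut B s z) - 1) ε = ι ((1 : ℚ) ⊗ₜ z) := by
  simp [blowupAut_apply, ← TensorProduct.tmul_sub]

theorem baseChange_blowupAut_sub_one_baseChange_inr (v : ℚ ⊗[ℤ] K) :
    (baseChange ℚ (blowupAut B s z) - 1) (ι v) =
      ι ((baseChange ℚ s - 1) v) - BilinForm.baseChange ℚ B v ((1 : ℚ) ⊗ₜ z) • ε := by
  induction v using TensorProduct.induction_on with
  | zero => simp
  | tmul a y =>
    simp [blowupAut_apply, ← TensorProduct.tmul_sub, intCast_mul_smul_exceptional]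
  | add v w hv hw => simp only [map_add, LinearMap.add_apply, hv, hw, add_smul]; abel

theorem baseChange_blowupForm_baseChange_inr (v w : ℚ ⊗[ℤ] K) :
    BilinForm.baseChange ℚ (blowupForm B z) (ι v) (ι w) = BilinForm.baseChange ℚ B v w := by
  induction v using TensorProduct.induction_on with
  | zero => simp
  | tmul a x =>
    induction w using TensorProduct.induction_on with
    | zero => simp
    | tmul b y => simp [blowupForm_apply]
    | add w w' hw hw' => simp only [map_add, hw, hw']
  | add v v' hv hv' => simp only [map_add, LinearMap.add_apply, hv, hv']

theorem baseChange_blowupForm_exceptional_baseChange_inr (w : ℚ ⊗[ℤ] K) :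
    BilinForm.baseChange ℚ (blowupForm B z) ε (ι w) =
      BilinForm.baseChange ℚ B ((1 : ℚ) ⊗ₜ z) w := by
  induction w using TensorProduct.induction_on with
  | zero => simp
  | tmul b y => simp [blowupForm_apply]
  | add w w' hw hw' => simp only [map_add, hw, hw']

theorem baseChange_inr_injective : Function.Injective ι := by
  have h : baseChange ℚ (snd ℤ ℤ K) ∘ₗ ι = LinearMap.id := by
    rw [← baseChange_comp, snd_comp_inr, baseChange_id]
  exact Function.LeftInverse.injective fun v => congr($h v)

theorem exceptional_ne_zero : ε ≠ 0 := fun h => by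
  simpa using congr(Algebra.TensorProduct.rid ℤ ℚ ℚ (baseChange ℚ (fst ℤ ℤ K) $h))

theorem isCompl_range_baseChange_inr_span : IsCompl (range ι) (ℚ ∙ ε) := by
  refine ⟨Submodule.disjoint_def.mpr ?_, Submodule.codisjoint_iff_exists_add_eq.mpr ?_⟩
  · rintro _ ⟨v, rfl⟩ hv
    obtain ⟨c, hc⟩ := Submodule.mem_span_singleton.mp hv
    have hfst : baseChange ℚ (fst ℤ ℤ K) ∘ₗ ι = 0 := by
      rw [← baseChange_comp, fst_comp_inr, baseChange_zero]
    have h := congr(Algebra.TensorProduct.rid ℤ ℚ ℚ (baseChange ℚ (fst ℤ ℤ K) $hc))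
    simp [← comp_apply, hfst] at h
    simp [← hc, h]
  · intro u
    induction u using TensorProduct.induction_on with
    | zero => exact ⟨0, 0, zero_mem _, zero_mem _, add_zero 0⟩
    | tmul a p =>
      refine ⟨ι (a ⊗ₜ p.2), ((p.1 : ℚ) * a) • ε, mem_range_self _ _,
        Submodule.smul_mem _ _ (Submodule.mem_span_singleton_self _), ?_⟩
      rw [intCast_mul_smul_exceptional, baseChange_tmul, inr_apply, ← TensorProduct.tmul_add]
      simp
    | add u u' hu hu' =>
      obtain ⟨v, w, hv, hw, rfl⟩ := hu
      obtain ⟨v', w', hv', hw', rfl⟩ := hu'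
      exact ⟨v + v', w + w', add_mem hv hv', add_mem hw hw', by abel⟩

theorem finrank_rat_tensor_int_prod [Module.Finite ℤ K] :
    finrank ℚ (ℚ ⊗[ℤ] (ℤ × K)) = finrank ℚ (ℚ ⊗[ℤ] K) + 1 := by
  rw [← Submodule.finrank_add_eq_of_isCompl isCompl_range_baseChange_inr_span,
    finrank_range_of_inj baseChange_inr_injective, finrank_span_singleton exceptional_ne_zero]

theorem finrank_map_baseChange_inr (P : Submodule ℚ (ℚ ⊗[ℤ] K)) :
    finrank ℚ (P.map ι) = finrank ℚ P :=
  (Submodule.equivMapOfInjective ι baseChange_inr_injective P).finrank_eq.symm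

theorem finrank_map_baseChange_inr_sup_span [Module.Finite ℤ K] (P : Submodule ℚ (ℚ ⊗[ℤ] K)) :
    finrank ℚ (P.map ι ⊔ (ℚ ∙ ε) : Submodule ℚ _) = finrank ℚ P + 1 := by
  have hdisj : Disjoint (P.map ι) (ℚ ∙ ε) :=
    isCompl_range_baseChange_inr_span.disjoint.mono_left LinearMap.map_le_range
  have hsum := Submodule.finrank_sup_add_finrank_inf_eq (P.map ι) (ℚ ∙ ε)
  rwa [hdisj.eq_bot, finrank_bot, add_zero, finrank_span_singleton exceptional_ne_zero,
    finrank_map_baseChange_inr] at hsum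

variable {F1 F2 : Submodule ℚ (ℚ ⊗[ℤ] K)} {B s z}

theorem IsCodimFiltration.blowup [Module.Finite ℤ K] (hfil : IsCodimFiltration B s F1 F2)
    (hz : (1 : ℚ) ⊗ₜ[ℤ] z ∈ F2) :
    IsCodimFiltration (blowupForm B z) (blowupAut B s z) (F1.map ι ⊔ (ℚ ∙ ε))
      (F2.map ι) := by
  obtain ⟨h21, hrange, hF1, hF2, hd1, hd2, horth⟩ := hfil
  set T := baseChange ℚ (blowupAut B s z) - 1
  set t := baseChange ℚ s - 1
  have hTε : T ε = ι ((1 : ℚ) ⊗ₜ z) := baseChange_blowupAut_sub_one_exceptional B s z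
  have hTι : ∀ v ∈ F1, T (ι v) = ι (t v) := fun v hv => by
    rw [baseChange_blowupAut_sub_one_baseChange_inr, horth v hv _ hz, zero_smul, sub_zero]
  have hspan : ε ∈ F1.map ι ⊔ (ℚ ∙ ε) :=
    Submodule.mem_sup_right (Submodule.mem_span_singleton_self _)
  refine ⟨(Submodule.map_mono h21).trans le_sup_left, ?_, ?_, ?_, ?_, ?_, ?_⟩
  · rw [range_eq_map, ← isCompl_range_baseChange_inr_span.sup_eq_top, Submodule.map_sup,
      sup_le_iff, Submodule.map_span, Set.image_singleton, Submodule.span_singleton_le_iff_mem]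
    refine ⟨?_, hTε ▸ Submodule.mem_sup_left (Submodule.mem_map_of_mem (h21 hz))⟩
    rintro _ ⟨_, ⟨v, rfl⟩, rfl⟩
    rw [baseChange_blowupAut_sub_one_baseChange_inr]
    exact sub_mem (Submodule.mem_sup_left (Submodule.mem_map_of_mem (hrange (mem_range_self _ _))))
      (Submodule.smul_mem _ _ hspan)
  · rw [Submodule.map_sup, sup_le_iff, Submodule.map_span, Set.image_singleton,
      Submodule.span_singleton_le_iff_mem, hTε]
    refine ⟨?_, Submodule.mem_map_of_mem hz⟩
    rintro _ ⟨_, ⟨v, hv, rfl⟩, rfl⟩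
    rw [hTι v hv]
    exact Submodule.mem_map_of_mem (hF1 (Submodule.mem_map_of_mem hv))
  · refine Submodule.eq_bot_iff _ |>.mpr ?_
    rintro _ ⟨_, ⟨v, hv, rfl⟩, rfl⟩
    have htv : t v ∈ (⊥ : Submodule ℚ _) := hF2 ▸ Submodule.mem_map_of_mem hv
    rw [hTι v (h21 hv), (Submodule.mem_bot ℚ).mp htv, map_zero]
  · have hd := Submodule.finrank_mono h21
    rw [finrank_map_baseChange_inr_sup_span, finrank_rat_tensor_int_prod]
    omega
  · rw [finrank_map_baseChange_inr, hd2]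
  · intro u hu w hw
    obtain ⟨_, ⟨v, hv, rfl⟩, _, hc, rfl⟩ := Submodule.mem_sup.mp hu
    obtain ⟨c, rfl⟩ := Submodule.mem_span_singleton.mp hc
    obtain ⟨w, hw, rfl⟩ := hw
    simp [baseChange_blowupForm_baseChange_inr, baseChange_blowupForm_exceptional_baseChange_inr,
      horth v hv w hw, horth _ (h21 hz) w hw]

end RationalBlowup

theorem blowup_is_surface_type_general (K : Type*) [AddCommGroup K]
    [Module.Finite ℤ K]
    (B : K →ₗ[ℤ] K →ₗ[ℤ] ℤ) (hB : ∀ v, (∀ w, B v w = 0) → v = 0)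
    (s : K →ₗ[ℤ] K) (hbij : Function.Bijective s)
    (hserre : ∀ v w, B v (s w) = B w v)
    (F1 F2 : Submodule ℚ (ℚ ⊗[ℤ] K)) (hfil : IsCodimFiltration B s F1 F2)
    (z : K) (hz : (1 : ℚ) ⊗ₜ[ℤ] z ∈ F2) :
    (∀ p : ℤ × K, (∀ q, blowupForm B z p q = 0) → p = 0) ∧
      Function.Bijective (blowupAut B s z) ∧
      (∀ p q : ℤ × K, blowupForm B z p (blowupAut B s z q) = blowupForm B z q p) ∧
      IsSurfaceType (blowupAut B s z) ∧
      IsCodimFiltration (blowupForm B z) (blowupAut B s z)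
        (Submodule.map (LinearMap.baseChange ℚ (LinearMap.inr ℤ ℤ K)) F1 ⊔
          Submodule.span ℚ {(1 : ℚ) ⊗ₜ[ℤ] (((1 : ℤ), (0 : K)) : ℤ × K)})
        (Submodule.map (LinearMap.baseChange ℚ (LinearMap.inr ℤ ℤ K)) F2) := by
  have hzz : B z z = 0 := hfil.apply_self_eq_zero hz
  have hzB : ∀ x, B x z = B z x := fun x => by rw [← hfil.apply_map_right_eq hz, hserre]
  have hblowup := hfil.blowup hz
  exact ⟨blowupForm_nondegenerate hB, blowupAut_bijective hbij hserre hzz,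
    blowupForm_blowupAut hserre hzz hzB, hblowup.isSurfaceType, hblowup⟩

/-- the numerical blowup `K̃ = ℤ·f ⊕ K` of an integral Serre lattice of
surface type (with codimension filtration `(F¹, F²)`) at `z ∈ F²K` is again an integral
Serre lattice of surface type, and `F¹K̃ := F¹K ⊕ ℤ·f`, `F²K̃ := F²K` is a codimension
filtration on it. -/
theorem blowup_is_surface_type (K : Type*) [AddCommGroup K]
    [Module.Free ℤ K] [Module.Finite ℤ K]
    (B : K →ₗ[ℤ] K →ₗ[ℤ] ℤ) (hB : ∀ v, (∀ w, B v w = 0) → v = 0)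
    (s : K →ₗ[ℤ] K) (hbij : Function.Bijective s)
    (hserre : ∀ v w, B v (s w) = B w v)
    (hsurf : IsSurfaceType s)
    (F1 F2 : Submodule ℚ (ℚ ⊗[ℤ] K)) (hfil : IsCodimFiltration B s F1 F2)
    (z : K) (hz : (1 : ℚ) ⊗ₜ[ℤ] z ∈ F2) :
    (∀ p : ℤ × K, (∀ q, blowupForm B z p q = 0) → p = 0) ∧
      Function.Bijective (blowupAut B s z) ∧
      (∀ p q : ℤ × K, blowupForm B z p (blowupAut B s z q) = blowupForm B z q p) ∧
      IsSurfaceType (blowupAut B s z) ∧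
      IsCodimFiltration (blowupForm B z) (blowupAut B s z)
        (Submodule.map (LinearMap.baseChange ℚ (LinearMap.inr ℤ ℤ K)) F1 ⊔
          Submodule.span ℚ {(1 : ℚ) ⊗ₜ[ℤ] (((1 : ℤ), (0 : K)) : ℤ × K)})
        (Submodule.map (LinearMap.baseChange ℚ (LinearMap.inr ℤ ℤ K)) F2) :=
  blowup_is_surface_type_general K B hB s hbij hserre F1 F2 hfil z hz
end

section
/- Let (K, ⟨−,−⟩, s) be an integral Serre lattice of surface type equipped with a codimension filtration (F¹, F²), and let f ∈ F¹K with ⟨f, f⟩ = 1. Set z := (s − 1)f and K̄ := {y ∈ K : ⟨y, f⟩ = 0}. Then: K = ℤ·f ⊕ K̄; the restriction of ⟨−,−⟩ to K̄ is nondegenerate; z ∈ F²K and z ∈ K̄; the map s̄(y) := s(y) + ⟨y, z⟩·f sends K̄ into K̄ and (K̄, ⟨−,−⟩|_{K̄}, s̄) is an integral Serre lattice of surface type with codimension filtration F¹K̄ := F¹(K̄⊗ℚ) ∩ F¹V, F²K̄ := F²V (intersected with K̄ ⊗ ℚ); and the numerical blowup of K̄ at z is isomorphic to K via the map sending f to f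 and K̄ into K identically (this map matches the bilinear forms and intertwines the blowup automorphism with s). -/
open TensorProduct

variable {K : Type*} [AddCommGroup K]

/-!
Since `⟨f, f⟩ = 1`, the projection `x ↦ x - ⟨x, f⟩ f` splits `K = ℤ f ⊕ f^⊥`, and `s̄` is the
compression of `s` to `f^⊥`. The filtration controls `z = (s - 1) f`: it lies in `F²`, so
`⟨f, z⟩ = ⟨z, z⟩ = 0` and `s z = z`, and the Serre relation then gives `⟨z, f⟩ = 0` and
`⟨f, y⟩ = ⟨z, y⟩` for `y ∈ f^⊥`; these are exactly the blowup formulas for `(m, y) ↦ m f + y`.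
The blowup automorphism is conjugate to `s`, which makes `s̄` surjective, hence bijective since
`f^⊥` is finitely generated. Over `ℚ`, `f^⊥ ⊗ ℚ` is the hyperplane `⟨-, f⟩ = 0` and
`ι ∘ (s̄ - 1) = π ∘ (s - 1) ∘ ι` for the projection `π` along `f`. So the filtration restricts:
cutting with the hyperplane lowers the dimensions of `ℚ ⊗ K` and of `F¹ ∋ f` by one and leaves
`F² ⊆ f^⊥` alone; `rank (s̄ - 1) ≤ rank (s - 1)`; and unipotence follows from the restricted
filtration alone.
-/

section Functional

variable {R M : Type*} [CommRing R] [AddCommGroup M] [Module R M] {φ : M →ₗ[R] R} {f : M}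

def kerProj (hf : φ f = 1) : M →ₗ[R] LinearMap.ker φ :=
  (LinearMap.id - LinearMap.toSpanSingleton R M f ∘ₗ φ).codRestrict _ fun x => by simp [hf]

@[simp]
theorem coe_kerProj (hf : φ f = 1) (x : M) : (kerProj hf x : M) = x - φ x • f := rfl

theorem isCompl_span_singleton_ker (hf : φ f = 1) : IsCompl (R ∙ f) (LinearMap.ker φ) := by
  refine ⟨Submodule.disjoint_def.mpr ?_, codisjoint_iff.mpr (eq_top_iff.mpr fun x _ => ?_)⟩
  · rintro x hx (hker : φ x = 0)
    obtain ⟨m, rfl⟩ := Submodule.mem_span_singleton.mp hx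
    simp_all
  · exact Submodule.mem_sup.mpr
      ⟨φ x • f, Submodule.smul_mem _ _ (Submodule.mem_span_singleton_self f), _, (kerProj hf x).2,
        by simp⟩

theorem bijective_coprod_toSpanSingleton_subtype_ker (hf : φ f = 1) :
    Function.Bijective
      (LinearMap.coprod (LinearMap.toSpanSingleton R M f) (LinearMap.ker φ).subtype) := by
  refine ⟨LinearMap.ker_eq_bot.mp (eq_bot_iff.mpr ?_), fun x => ⟨(φ x, kerProj hf x), by simp⟩⟩
  rintro ⟨m, y⟩ (h : m • f + (y : M) = 0)
  have hm : m = 0 := by simpa [hf, y.2] using congrArg φ h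
  subst hm
  simp_all

theorem eq_zero_of_forall_ker_flip_apply_eq_zero {B : M →ₗ[R] M →ₗ[R] R}
    (hB : ∀ v, (∀ w, B v w = 0) → v = 0) (hf : B f f = 1) {x : M}
    (hx : x ∈ LinearMap.ker (B.flip f)) (hxB : ∀ y ∈ LinearMap.ker (B.flip f), B x y = 0) :
    x = 0 :=
  hB x fun w => by
    have hf' : B.flip f f = 1 := hf
    have hx' : B x f = 0 := hx
    have h := hxB _ (kerProj hf' w).2
    rwa [coe_kerProj, map_sub, map_smul, LinearMap.flip_apply, hx', smul_zero, sub_zero] at h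

end Functional

theorem finrank_inf_ker_add_one {k V : Type*} [Field k] [AddCommGroup V] [Module k V]
    [FiniteDimensional k V] {φ : Module.Dual k V} {W : Submodule k V} {w : V} (hw : w ∈ W)
    (hφ : φ w ≠ 0) : Module.finrank k ↥(W ⊓ LinearMap.ker φ) + 1 = Module.finrank k W := by
  have hψ : φ ∘ₗ W.subtype ≠ 0 := fun h => hφ (by simpa using congr($h ⟨w, hw⟩))
  rw [← Module.Dual.finrank_ker_add_one_of_ne_zero hψ, LinearMap.ker_comp,
    ← Submodule.finrank_map_subtype_eq, Submodule.map_comap_subtype]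

theorem finrank_comap_of_injective {k V V' : Type*} [Field k] [AddCommGroup V] [Module k V]
    [AddCommGroup V'] [Module k V'] {ι : V →ₗ[k] V'} (hι : Function.Injective ι)
    (F : Submodule k V') :
    Module.finrank k (F.comap ι) = Module.finrank k ↥(LinearMap.range ι ⊓ F) := by
  rw [← Submodule.map_comap_eq]
  exact (Submodule.equivMapOfInjective ι hι _).finrank_eq

section BaseChange

variable (B : K →ₗ[ℤ] K →ₗ[ℤ] ℤ)

theorem one_tmul_injective [Module.Flat ℤ K] :
    Function.Injective fun x : K => (1 : ℚ) ⊗ₜ[ℤ] x := by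
  have h := (Module.Flat.rTensor_preserves_injective_linearMap (M := K) (Algebra.linearMap ℤ ℚ)
    Int.cast_injective).comp (TensorProduct.lid ℤ K).symm.injective
  convert h using 1
  ext x
  simp

theorem baseChange_subtype_injective (N : Submodule ℤ K) :
    Function.Injective (LinearMap.baseChange ℚ N.subtype) := by
  rw [LinearMap.baseChange_eq_ltensor]
  exact Module.Flat.lTensor_preserves_injective_linearMap _ N.injective_subtype

@[simp]
theorem LinearMap.BilinForm.baseChange_one_tmul (x y : K) :
    LinearMap.BilinForm.baseChange ℚ B (1 ⊗ₜ x) (1 ⊗ₜ y) = B x y := by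
  simp [LinearMap.BilinForm.baseChange_tmul]

theorem LinearMap.BilinForm.baseChange_compl₂_baseChange {s : K →ₗ[ℤ] K}
    (hserre : ∀ v w, B v (s w) = B w v) :
    (LinearMap.BilinForm.baseChange ℚ B).compl₂ (LinearMap.baseChange ℚ s) =
      (LinearMap.BilinForm.baseChange ℚ B).flip := by
  ext x y
  simp [LinearMap.BilinForm.baseChange_tmul, hserre]

theorem baseChange_toSpanSingleton_comp_flip (f g : K) :
    LinearMap.baseChange ℚ (LinearMap.toSpanSingleton ℤ K f ∘ₗ B.flip g) =
      LinearMap.toSpanSingleton ℚ _ (1 ⊗ₜ f) ∘ₗ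
        (LinearMap.BilinForm.baseChange ℚ B).flip (1 ⊗ₜ g) := by
  ext x
  simp [LinearMap.BilinForm.baseChange_tmul, Int.cast_smul_eq_zsmul]

theorem LinearMap.BilinForm.baseChange_domRestrict₁₂ (N : Submodule ℤ K) :
    LinearMap.BilinForm.baseChange ℚ (B.domRestrict₁₂ N N) =
      (LinearMap.BilinForm.baseChange ℚ B).compl₁₂ (LinearMap.baseChange ℚ N.subtype)
        (LinearMap.baseChange ℚ N.subtype) := by
  ext x y
  simp [LinearMap.BilinForm.baseChange_tmul, LinearMap.domRestrict₁₂_apply]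

end BaseChange

section CodimFiltration

variable {B : K →ₗ[ℤ] K →ₗ[ℤ] ℤ} {s : K →ₗ[ℤ] K} {F1 F2 : Submodule ℚ (ℚ ⊗[ℤ] K)}

theorem IsCodimFiltration.sub_one_apply_eq_zero (hfil : IsCodimFiltration B s F1 F2)
    {v : ℚ ⊗[ℤ] K} (hv : v ∈ F2) : (LinearMap.baseChange ℚ s - 1) v = 0 := by
  have h := Submodule.mem_map_of_mem (f := LinearMap.baseChange ℚ s - 1) hv
  rwa [hfil.2.2.2.1, Submodule.mem_bot] at h

theorem IsCodimFiltration.pow_finrank_eq_zero [Module.Finite ℤ K]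
    (hfil : IsCodimFiltration B s F1 F2) :
    (LinearMap.baseChange ℚ s - 1) ^ Module.finrank ℚ (ℚ ⊗[ℤ] K) = 0 := by
  obtain ⟨h21, hrange, hmap1, -, hd1, hd2, -⟩ := id hfil
  have hN : 2 ≤ Module.finrank ℚ (ℚ ⊗[ℤ] K) := by
    have := Submodule.finrank_mono h21
    omega
  rcases hN.eq_or_lt with hN | hN
  · have hF : F2 = F1 := Submodule.eq_of_le_of_finrank_eq h21 (by omega)
    rw [← hN]
    refine LinearMap.ext fun v => ?_
    exact hfil.sub_one_apply_eq_zero (hF ▸ hrange ⟨v, rfl⟩)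
  · refine pow_eq_zero_of_le hN (LinearMap.ext fun v => ?_)
    exact hfil.sub_one_apply_eq_zero (hmap1 ⟨_, hrange ⟨v, rfl⟩, rfl⟩)

theorem IsCodimFiltration.apply_eq_zero (hfil : IsCodimFiltration B s F1 F2) {x y : K}
    (hx : (1 : ℚ) ⊗ₜ[ℤ] x ∈ F1) (hy : (1 : ℚ) ⊗ₜ[ℤ] y ∈ F2) : B x y = 0 := by
  have h := hfil.2.2.2.2.2.2 _ hx _ hy
  rw [LinearMap.BilinForm.baseChange_one_tmul] at h
  exact_mod_cast h

theorem IsCodimFiltration.one_tmul_sub_mem (hfil : IsCodimFiltration B s F1 F2) {x : K}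
    (hx : (1 : ℚ) ⊗ₜ[ℤ] x ∈ F1) : (1 : ℚ) ⊗ₜ[ℤ] (s x - x) ∈ F2 :=
  hfil.2.2.1 ⟨_, hx, by simp [tmul_sub]⟩

theorem IsCodimFiltration.apply_eq_self [Module.Flat ℤ K] (hfil : IsCodimFiltration B s F1 F2)
    {x : K} (hx : (1 : ℚ) ⊗ₜ[ℤ] x ∈ F2) : s x = x := by
  refine sub_eq_zero.mp (one_tmul_injective ?_)
  simpa [tmul_sub] using hfil.sub_one_apply_eq_zero hx

theorem IsCodimFiltration.le_ker_flip (hserre : ∀ v w, B v (s w) = B w v)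
    (hfil : IsCodimFiltration B s F1 F2) {f : K} (hf : (1 : ℚ) ⊗ₜ[ℤ] f ∈ F1) :
    F2 ≤ LinearMap.ker ((LinearMap.BilinForm.baseChange ℚ B).flip (1 ⊗ₜ f)) := by
  intro w hw
  have hsw : LinearMap.baseChange ℚ s w = w := by
    simpa [sub_eq_zero] using hfil.sub_one_apply_eq_zero hw
  have h := LinearMap.congr_fun₂
    (LinearMap.BilinForm.baseChange_compl₂_baseChange B hserre) (1 ⊗ₜ f) w
  simp only [LinearMap.compl₂_apply, hsw] at h
  rw [LinearMap.mem_ker, ← h]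
  exact hfil.2.2.2.2.2.2 _ hf _ hw

end CodimFiltration

theorem surjective_of_surjective_blowupAut {B : K →ₗ[ℤ] K →ₗ[ℤ] ℤ} {s : K →ₗ[ℤ] K} {z : K}
    (hz : s z = z) (h : Function.Surjective (blowupAut B s z)) : Function.Surjective s := by
  intro w
  obtain ⟨p, hp⟩ := h (0, w)
  refine ⟨p.2 + p.1 • z, ?_⟩
  have hw : p.1 • z + s p.2 = w := congrArg Prod.snd hp
  rw [map_add, map_smul, hz, ← hw, add_comm]

/-- `s̄` is defined as the compression `y ↦ s y - ⟨s y, f⟩ f` of `s` to `f^⊥`; it agrees with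
the formula `s̄ y = s y + ⟨y, z⟩ f` by `coe_blowdownAut`. -/
def blowdownAut (B : K →ₗ[ℤ] K →ₗ[ℤ] ℤ) (s : K →ₗ[ℤ] K) {f : K} (hff : B f f = 1) :
    LinearMap.ker (B.flip f) →ₗ[ℤ] LinearMap.ker (B.flip f) :=
  kerProj (φ := B.flip f) (by rwa [LinearMap.flip_apply]) ∘ₗ s ∘ₗ (LinearMap.ker (B.flip f)).subtype

section Blowdown

variable {B : K →ₗ[ℤ] K →ₗ[ℤ] ℤ} {s : K →ₗ[ℤ] K} {f : K}

theorem apply_sub_self_flip_eq_zero (hserre : ∀ v w, B v (s w) = B w v)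
    (hfz : B f (s f - f) = 0) (hzz : B (s f - f) (s f - f) = 0) :
    B (s f - f) f = 0 := by
  have h := hserre (s f - f) f
  simp only [map_sub, LinearMap.sub_apply] at h hzz hfz ⊢
  linarith

theorem apply_apply_sub_self (hserre : ∀ v w, B v (s w) = B w v)
    (hsz : s (s f - f) = s f - f) (y : K) :
    B (s y) (s f - f) = B y (s f - f) := by
  conv_lhs => rw [← hsz]
  rw [hserre, hserre]

theorem coe_blowdownAut (hserre : ∀ v w, B v (s w) = B w v)
    (hsz : s (s f - f) = s f - f) (hff : B f f = 1)
    (y : LinearMap.ker (B.flip f)) : (blowdownAut B s hff y : K) = s y + B y (s f - f) • f := by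
  have hyf : B y f = 0 := y.2
  have hsysf : B (s y) (s f) = 0 := by rw [hserre, hserre, hyf]
  have hsyf : B (s y) f = -B y (s f - f) := by
    rw [← apply_apply_sub_self hserre hsz y, map_sub, hsysf, zero_sub, neg_neg]
  simp [blowdownAut, hsyf, sub_eq_add_neg, ← neg_smul]

theorem domRestrict₁₂_blowdownAut (hserre : ∀ v w, B v (s w) = B w v)
    (hff : B f f = 1) (x y : LinearMap.ker (B.flip f)) :
    B.domRestrict₁₂ _ _ x (blowdownAut B s hff y) = B.domRestrict₁₂ _ _ y x := by
  have hxf : B x f = 0 := x.2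
  simp [blowdownAut, LinearMap.domRestrict₁₂_apply, hxf, hserre]

theorem blowdownAut_apply_sub_self (hserre : ∀ v w, B v (s w) = B w v)
    (hsz : s (s f - f) = s f - f)
    (hzz : B (s f - f) (s f - f) = 0) (hff : B f f = 1) (hz : s f - f ∈ LinearMap.ker (B.flip f)) :
    blowdownAut B s hff ⟨s f - f, hz⟩ = ⟨s f - f, hz⟩ :=
  Subtype.ext <| (coe_blowdownAut hserre hsz hff _).trans <| by
    dsimp only
    rw [hsz, hzz, zero_smul, add_zero]

theorem apply_sub_self_eq_of_mem_ker_flip (hserre : ∀ v w, B v (s w) = B w v)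
    (hsurj : Function.Surjective s)
    (hsz : s (s f - f) = s f - f) {w : K} (hw : w ∈ LinearMap.ker (B.flip f)) :
    B (s f - f) w = B f w := by
  obtain ⟨u, rfl⟩ := hsurj w
  have hwf : B (s u) f = 0 := hw
  rw [hserre, hserre, ← apply_apply_sub_self hserre hsz u, map_sub, hwf,
    sub_zero, hserre, hserre]

theorem coprod_blowupAut (hserre : ∀ v w, B v (s w) = B w v)
    (hsz : s (s f - f) = s f - f) (hff : B f f = 1)
    (hz : s f - f ∈ LinearMap.ker (B.flip f)) (p : ℤ × LinearMap.ker (B.flip f)) :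
    LinearMap.coprod (LinearMap.toSpanSingleton ℤ K f) (LinearMap.ker (B.flip f)).subtype
        (blowupAut (B.domRestrict₁₂ _ _) (blowdownAut B s hff) ⟨s f - f, hz⟩ p) =
      s (LinearMap.coprod (LinearMap.toSpanSingleton ℤ K f) (LinearMap.ker (B.flip f)).subtype
        p) := by
  obtain ⟨m, y⟩ := p
  simp [blowupAut, coe_blowdownAut hserre hsz, LinearMap.domRestrict₁₂_apply]
  module

theorem apply_coprod_eq_blowupForm (hserre : ∀ v w, B v (s w) = B w v)
    (hsurj : Function.Surjective s)
    (hsz : s (s f - f) = s f - f) (hff : B f f = 1) (hz : s f - f ∈ LinearMap.ker (B.flip f))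
    (p q : ℤ × LinearMap.ker (B.flip f)) :
    B (LinearMap.coprod (LinearMap.toSpanSingleton ℤ K f) (LinearMap.ker (B.flip f)).subtype p)
        (LinearMap.coprod (LinearMap.toSpanSingleton ℤ K f) (LinearMap.ker (B.flip f)).subtype q) =
      blowupForm (B.domRestrict₁₂ _ _) ⟨s f - f, hz⟩ p q := by
  obtain ⟨m, x⟩ := p
  obtain ⟨n, y⟩ := q
  have hxf : B x f = 0 := x.2
  have hzy := apply_sub_self_eq_of_mem_ker_flip hserre hsurj hsz y.2
  simp only [blowupForm, LinearMap.mk₂_apply, LinearMap.domRestrict₁₂_apply, hzy]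
  simp [hff, hxf]
  ring

theorem blowdownAut_bijective [Module.Finite ℤ K] (hserre : ∀ v w, B v (s w) = B w v)
    (hbij : Function.Bijective s)
    (hsz : s (s f - f) = s f - f) (hzz : B (s f - f) (s f - f) = 0) (hff : B f f = 1)
    (hz : s f - f ∈ LinearMap.ker (B.flip f)) : Function.Bijective (blowdownAut B s hff) := by
  have hΦ := bijective_coprod_toSpanSingleton_subtype_ker (φ := B.flip f) hff
  have hsurj : Function.Surjective (blowdownAut B s hff) := by
    refine surjective_of_surjective_blowupAut (B := B.domRestrict₁₂ _ _)
      (blowdownAut_apply_sub_self hserre hsz hzz hff hz) fun r => ?_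
    obtain ⟨x, hx⟩ := hbij.2 (LinearMap.coprod (LinearMap.toSpanSingleton ℤ K f)
      (LinearMap.ker (B.flip f)).subtype r)
    obtain ⟨p, rfl⟩ := hΦ.2 x
    exact ⟨p, hΦ.1 (by rw [coprod_blowupAut hserre hsz hff hz, hx])⟩
  exact ⟨OrzechProperty.injective_of_surjective_endomorphism _ hsurj, hsurj⟩

end Blowdown

section RationalBlowdown

variable {B : K →ₗ[ℤ] K →ₗ[ℤ] ℤ} {s : K →ₗ[ℤ] K} {f : K}

theorem range_baseChange_subtype_ker_flip (hff : B f f = 1) :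
    LinearMap.range (LinearMap.baseChange ℚ (LinearMap.ker (B.flip f)).subtype) =
      LinearMap.ker ((LinearMap.BilinForm.baseChange ℚ B).flip (1 ⊗ₜ f)) := by
  have hff' : B.flip f f = 1 := hff
  refine le_antisymm (LinearMap.range_le_ker_iff.mpr ?_) fun v hv => ?_
  · ext y
    have hyf : B y f = 0 := y.2
    simp [LinearMap.BilinForm.baseChange_tmul, hyf]
  · have hvf : LinearMap.BilinForm.baseChange ℚ B v (1 ⊗ₜ f) = 0 := hv
    refine ⟨LinearMap.baseChange ℚ (kerProj hff') v, ?_⟩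
    rw [← LinearMap.comp_apply, ← LinearMap.baseChange_comp,
      show (LinearMap.ker (B.flip f)).subtype ∘ₗ kerProj hff' =
        LinearMap.id - LinearMap.toSpanSingleton ℤ K f ∘ₗ B.flip f from rfl,
      LinearMap.baseChange_sub, LinearMap.baseChange_id, baseChange_toSpanSingleton_comp_flip]
    simp [hvf]

theorem baseChange_subtype_comp_blowdownAut_sub_one (hff : B f f = 1) :
    LinearMap.baseChange ℚ (LinearMap.ker (B.flip f)).subtype ∘ₗ
        (LinearMap.baseChange ℚ (blowdownAut B s hff) - 1) =
      (LinearMap.id - LinearMap.toSpanSingleton ℚ _ (1 ⊗ₜ f) ∘ₗ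
          (LinearMap.BilinForm.baseChange ℚ B).flip (1 ⊗ₜ f)) ∘ₗ
        (LinearMap.baseChange ℚ s - 1) ∘ₗ
          LinearMap.baseChange ℚ (LinearMap.ker (B.flip f)).subtype := by
  have h : (LinearMap.ker (B.flip f)).subtype ∘ₗ (blowdownAut B s hff - 1) =
      (LinearMap.id - LinearMap.toSpanSingleton ℤ K f ∘ₗ B.flip f) ∘ₗ (s - 1) ∘ₗ
        (LinearMap.ker (B.flip f)).subtype := by
    ext y
    have hyf : B y f = 0 := y.2
    simp [blowdownAut, hyf]
    abel
  have := congrArg (LinearMap.baseChange ℚ) h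
  rwa [LinearMap.baseChange_comp, LinearMap.baseChange_comp, LinearMap.baseChange_comp,
    LinearMap.baseChange_sub, LinearMap.baseChange_sub, LinearMap.baseChange_sub,
    LinearMap.baseChange_one, LinearMap.baseChange_one, LinearMap.baseChange_id,
    baseChange_toSpanSingleton_comp_flip] at this

theorem finrank_baseChange_ker_flip_add_one [Module.Finite ℤ K] (hff : B f f = 1) :
    Module.finrank ℚ (ℚ ⊗[ℤ] LinearMap.ker (B.flip f)) + 1 = Module.finrank ℚ (ℚ ⊗[ℤ] K) := by
  have h := finrank_inf_ker_add_one (W := ⊤) (Submodule.mem_top (x := (1 : ℚ) ⊗ₜ[ℤ] f))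
    (φ := (LinearMap.BilinForm.baseChange ℚ B).flip (1 ⊗ₜ f)) (by simp [hff])
  rwa [top_inf_eq, finrank_top, ← range_baseChange_subtype_ker_flip hff,
    LinearMap.finrank_range_of_inj (baseChange_subtype_injective _)] at h

variable {F1 F2 : Submodule ℚ (ℚ ⊗[ℤ] K)}

theorem isCodimFiltration_blowdownAut [Module.Finite ℤ K] (hserre : ∀ v w, B v (s w) = B w v)
    (hfil : IsCodimFiltration B s F1 F2) (hf1 : (1 : ℚ) ⊗ₜ[ℤ] f ∈ F1) (hff : B f f = 1) :
    IsCodimFiltration (B.domRestrict₁₂ (LinearMap.ker (B.flip f)) (LinearMap.ker (B.flip f)))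
      (blowdownAut B s hff)
      (F1.comap (LinearMap.baseChange ℚ (LinearMap.ker (B.flip f)).subtype))
      (F2.comap (LinearMap.baseChange ℚ (LinearMap.ker (B.flip f)).subtype)) := by
  obtain ⟨h21, hrange, hmap1, -, hd1, hd2, hpair⟩ := id hfil
  set ι := LinearMap.baseChange ℚ (LinearMap.ker (B.flip f)).subtype
  have hι : Function.Injective ι := baseChange_subtype_injective _
  set U := LinearMap.baseChange ℚ s - 1
  have hkey (v) : ι ((LinearMap.baseChange ℚ (blowdownAut B s hff) - 1) v) =
      U (ι v) - (LinearMap.BilinForm.baseChange ℚ B).flip (1 ⊗ₜ f) (U (ι v)) • (1 ⊗ₜ f) :=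
    LinearMap.congr_fun (baseChange_subtype_comp_blowdownAut_sub_one hff) v
  have hF2 := hfil.le_ker_flip hserre hf1
  have hdim (F : Submodule ℚ (ℚ ⊗[ℤ] K)) : Module.finrank ℚ (F.comap ι) =
      Module.finrank ℚ
        ↥(F ⊓ LinearMap.ker ((LinearMap.BilinForm.baseChange ℚ B).flip (1 ⊗ₜ f))) := by
    rw [finrank_comap_of_injective hι, range_baseChange_subtype_ker_flip hff, inf_comm]
  refine ⟨Submodule.comap_mono h21, ?_, ?_, ?_, ?_, ?_, ?_⟩
  · rintro _ ⟨v, rfl⟩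
    show ι _ ∈ F1
    rw [hkey]
    exact F1.sub_mem (hrange ⟨_, rfl⟩) (F1.smul_mem _ hf1)
  · rintro _ ⟨v, hv, rfl⟩
    have hw := hmap1 ⟨_, hv, rfl⟩
    show ι _ ∈ F2
    rwa [hkey, show (LinearMap.BilinForm.baseChange ℚ B).flip (1 ⊗ₜ f) _ = 0 from hF2 hw, zero_smul,
      sub_zero]
  · refine eq_bot_iff.mpr ?_
    rintro _ ⟨v, hv, rfl⟩
    refine (Submodule.mem_bot ℚ).mpr (hι ?_)
    rw [hkey, hfil.sub_one_apply_eq_zero hv]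
    simp
  · have h := finrank_inf_ker_add_one hf1 (φ := (LinearMap.BilinForm.baseChange ℚ B).flip (1 ⊗ₜ f))
      (by simp [hff])
    have := finrank_baseChange_ker_flip_add_one hff
    rw [hdim]
    omega
  · rw [hdim, inf_eq_left.mpr hF2, hd2]
  · intro v hv w hw
    rw [LinearMap.BilinForm.baseChange_domRestrict₁₂]
    exact hpair _ hv _ hw

theorem isSurfaceType_blowdownAut [Module.Finite ℤ K] (hserre : ∀ v w, B v (s w) = B w v)
    (hsurf : IsSurfaceType s) (hfil : IsCodimFiltration B s F1 F2) (hf1 : (1 : ℚ) ⊗ₜ[ℤ] f ∈ F1)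
    (hff : B f f = 1) : IsSurfaceType (blowdownAut B s hff) := by
  refine ⟨(isCodimFiltration_blowdownAut hserre hfil hf1 hff).pow_finrank_eq_zero, ?_⟩
  set ι := LinearMap.baseChange ℚ (LinearMap.ker (B.flip f)).subtype
  set π := LinearMap.id - LinearMap.toSpanSingleton ℚ _ (1 ⊗ₜ f) ∘ₗ
    (LinearMap.BilinForm.baseChange ℚ B).flip (1 ⊗ₜ f)
  set U := LinearMap.baseChange ℚ s - 1
  set Ū := LinearMap.baseChange ℚ (blowdownAut B s hff) - 1
  calc Module.finrank ℚ (LinearMap.range Ū)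
      = Module.finrank ℚ (LinearMap.range (ι ∘ₗ Ū)) := by
        rw [LinearMap.range_comp]
        exact (Submodule.equivMapOfInjective _ (baseChange_subtype_injective _) _).finrank_eq
    _ = Module.finrank ℚ (LinearMap.range ((π ∘ₗ U) ∘ₗ ι)) := by
        rw [baseChange_subtype_comp_blowdownAut_sub_one, LinearMap.comp_assoc]
    _ ≤ Module.finrank ℚ (LinearMap.range (π ∘ₗ U)) :=
        Submodule.finrank_mono (LinearMap.range_comp_le_range _ _)
    _ ≤ Module.finrank ℚ (LinearMap.range U) := by
        rw [LinearMap.range_comp]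
        exact Submodule.finrank_map_le _ _
    _ ≤ 2 := hsurf.2

end RationalBlowdown

/-- numerical blowdown: let `(K, ⟨−,−⟩, s)` be an integral Serre lattice of
surface type with codimension filtration `(F¹, F²)` and `f ∈ F¹K` with `⟨f,f⟩ = 1`. With
`z := (s−1)f` and `K̄ := {y ∈ K : ⟨y,f⟩ = 0}`: `K = ℤ·f ⊕ K̄`; the restricted form is
nondegenerate; `z ∈ F²K ∩ K̄`; `s̄(y) := s(y) + ⟨y,z⟩·f` preserves `K̄` and makes `K̄` an
integral Serre lattice of surface type with the induced codimension filtration; and the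
numerical blowup of `K̄` at `z` is isomorphic to `K` via `(m, y) ↦ m·f + y`. -/
theorem blowdown (K : Type*) [AddCommGroup K]
    [Module.Free ℤ K] [Module.Finite ℤ K]
    (B : K →ₗ[ℤ] K →ₗ[ℤ] ℤ) (hB : ∀ v, (∀ w, B v w = 0) → v = 0)
    (s : K →ₗ[ℤ] K) (hbij : Function.Bijective s)
    (hserre : ∀ v w, B v (s w) = B w v)
    (hsurf : IsSurfaceType s)
    (F1 F2 : Submodule ℚ (ℚ ⊗[ℤ] K)) (hfil : IsCodimFiltration B s F1 F2)
    (f : K) (hf1 : (1 : ℚ) ⊗ₜ[ℤ] f ∈ F1) (hff : B f f = 1) :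
    IsCompl (Submodule.span ℤ {f}) (LinearMap.ker (B.flip f)) ∧
      (∀ x ∈ LinearMap.ker (B.flip f),
        (∀ y ∈ LinearMap.ker (B.flip f), B x y = 0) → x = 0) ∧
      (1 : ℚ) ⊗ₜ[ℤ] (s f - f) ∈ F2 ∧
      (∀ y ∈ LinearMap.ker (B.flip f),
        s y + B y (s f - f) • f ∈ LinearMap.ker (B.flip f)) ∧
      ∃ (hz : s f - f ∈ LinearMap.ker (B.flip f))
        (sbar : ↥(LinearMap.ker (B.flip f)) →ₗ[ℤ] ↥(LinearMap.ker (B.flip f))),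
        (∀ y : ↥(LinearMap.ker (B.flip f)),
          (sbar y : K) = s y + B y (s f - f) • f) ∧
        Function.Bijective sbar ∧
        (∀ x y : ↥(LinearMap.ker (B.flip f)),
          B.domRestrict₁₂ (LinearMap.ker (B.flip f)) (LinearMap.ker (B.flip f)) x (sbar y) =
            B.domRestrict₁₂ (LinearMap.ker (B.flip f)) (LinearMap.ker (B.flip f)) y x) ∧
        IsSurfaceType sbar ∧
        IsCodimFiltration
          (B.domRestrict₁₂ (LinearMap.ker (B.flip f)) (LinearMap.ker (B.flip f))) sbar
          (Submodule.comap (LinearMap.baseChange ℚ (LinearMap.ker (B.flip f)).subtype) F1)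
          (Submodule.comap (LinearMap.baseChange ℚ (LinearMap.ker (B.flip f)).subtype) F2) ∧
        (Function.Bijective
            (LinearMap.coprod (LinearMap.toSpanSingleton ℤ K f)
              (LinearMap.ker (B.flip f)).subtype) ∧
          (∀ p q : ℤ × ↥(LinearMap.ker (B.flip f)),
            B (LinearMap.coprod (LinearMap.toSpanSingleton ℤ K f)
                (LinearMap.ker (B.flip f)).subtype p)
              (LinearMap.coprod (LinearMap.toSpanSingleton ℤ K f)
                (LinearMap.ker (B.flip f)).subtype q) =
              blowupForm
                (B.domRestrict₁₂ (LinearMap.ker (B.flip f)) (LinearMap.ker (B.flip f)))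
                ⟨s f - f, hz⟩ p q) ∧
          ∀ p : ℤ × ↥(LinearMap.ker (B.flip f)),
            LinearMap.coprod (LinearMap.toSpanSingleton ℤ K f)
                (LinearMap.ker (B.flip f)).subtype
                (blowupAut
                  (B.domRestrict₁₂ (LinearMap.ker (B.flip f)) (LinearMap.ker (B.flip f)))
                  sbar ⟨s f - f, hz⟩ p) =
              s (LinearMap.coprod (LinearMap.toSpanSingleton ℤ K f)
                  (LinearMap.ker (B.flip f)).subtype p)) := by
  have hff' : B.flip f f = 1 := hff
  have hzF2 := hfil.one_tmul_sub_mem hf1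
  have hsz : s (s f - f) = s f - f := hfil.apply_eq_self hzF2
  have hzz : B (s f - f) (s f - f) = 0 := hfil.apply_eq_zero (hfil.1 hzF2) hzF2
  have hz : s f - f ∈ LinearMap.ker (B.flip f) :=
    apply_sub_self_flip_eq_zero hserre (hfil.apply_eq_zero hf1 hzF2) hzz
  have hsbar := coe_blowdownAut hserre hsz hff
  refine ⟨isCompl_span_singleton_ker hff',
    fun x hx => eq_zero_of_forall_ker_flip_apply_eq_zero hB hff hx, hzF2,
    fun y hy => hsbar ⟨y, hy⟩ ▸ (blowdownAut B s hff ⟨y, hy⟩).2, hz, blowdownAut B s hff,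
    hsbar, blowdownAut_bijective hserre hbij hsz hzz hff hz, domRestrict₁₂_blowdownAut hserre hff,
    isSurfaceType_blowdownAut hserre hsurf hfil hf1 hff,
    isCodimFiltration_blowdownAut hserre hfil hf1 hff,
    bijective_coprod_toSpanSingleton_subtype_ker hff',
    apply_coprod_eq_blowupForm hserre hbij.2 hsz hff hz, coprod_blowupAut hserre hsz hff hz⟩
end
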